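/- arXiv:2208.13057 — 8 statements merged into one kernel-verified Lean document; each statement's English description precedes it below -/
import Mathlib

section
/- Let Δ > 0, let g : ℂ → ℂ be complex differentiable (analytic) on the open disk {ω ∈ ℂ : |ω| < Δ}, let F : ℝ → ℝ be a measurable function with F(y) > 0 for y > 0, and suppose that |g(ω)| ≤ F(|Im ω|) for every ω with |ω| < Δ and Im ω ≠ 0. Then for every ρ ∈ (0, Δ) such that θ ↦ log F(ρ·sin θ) is integrable on (0, π/2), one has |g(0)| ≤ exp( (2/π) · ∫₀^{π/2} log F(ρ·sin θ) dθ ). -/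
/-!
By Jensen's formula, `log ‖g 0‖` is at most the average of `log ‖g‖` over the circle of radius `ρ`.
On that circle `|Im ω| = ρ |sin θ|`, so off the finitely many zeros of `g` and of `sin θ`,
`log ‖g‖ ≤ log F (ρ |sin θ|)`. The function `θ ↦ log F (ρ |sin θ|)` has period
`π` and is symmetric about `π / 2`, so its average over `[0, 2π]` is its average over `[0, π / 2]`.
-/

open MeasureTheory Real Metric Filter Set intervalIntegral

section Reflection

variable {E : Type*} [NormedAddCommGroup E] {f : ℝ → E} {b : ℝ}

theorem IntervalIntegrable.half_of_reflect (hf : ∀ x, f (b - x) = f x)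
    (hi : IntervalIntegrable f volume 0 (b / 2)) : IntervalIntegrable f volume (b / 2) b := by
  have := (hi.comp_sub_left b).symm
  simp only [hf, sub_zero] at this
  rwa [show b - b / 2 = b / 2 by ring] at this

theorem intervalIntegral.integral_eq_two_smul_of_reflect [NormedSpace ℝ E]
    (hf : ∀ x, f (b - x) = f x) (hi : IntervalIntegrable f volume 0 (b / 2)) :
    ∫ x in 0..b, f x = 2 • ∫ x in 0..b / 2, f x := by
  rw [← integral_add_adjacent_intervals hi (hi.half_of_reflect hf), two_smul]
  have := integral_comp_sub_left (a := 0) (b := b / 2) f b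
  simp only [hf, sub_zero, show b - b / 2 = b / 2 by ring] at this
  rw [this]

end Reflection

section AbsSin

theorem eqOn_comp_abs_sin {α : Type*} (u : ℝ → α) :
    EqOn (fun θ ↦ u |sin θ|) (fun θ ↦ u (sin θ)) (uIcc 0 (π / 2)) := by
  intro θ hθ
  rw [uIcc_of_le (by positivity)] at hθ
  simp only [abs_of_nonneg (sin_nonneg_of_nonneg_of_le_pi hθ.1 (by linarith [hθ.2, pi_pos]))]

theorem periodic_comp_abs_sin {α : Type*} (u : ℝ → α) :
    Function.Periodic (fun θ ↦ u |sin θ|) π :=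
  fun θ ↦ by simp [sin_add_pi]

variable {E : Type*} [NormedAddCommGroup E] {u : ℝ → E}

theorem intervalIntegrable_comp_abs_sin
    (hu : IntervalIntegrable (fun θ ↦ u (sin θ)) volume 0 (π / 2)) (a b : ℝ) :
    IntervalIntegrable (fun θ ↦ u |sin θ|) volume a b := by
  have hq : IntervalIntegrable (fun θ ↦ u |sin θ|) volume 0 (π / 2) :=
    (intervalIntegrable_congr ((eqOn_comp_abs_sin u).mono uIoc_subset_uIcc)).2 hu
  exact (periodic_comp_abs_sin u).intervalIntegrable₀ pi_ne_zero
    (hq.trans (hq.half_of_reflect fun θ ↦ by simp [sin_pi_sub])) a b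

theorem integral_comp_abs_sin_zero_two_pi [NormedSpace ℝ E]
    (hu : IntervalIntegrable (fun θ ↦ u (sin θ)) volume 0 (π / 2)) :
    ∫ θ in 0..2 * π, u |sin θ| = 4 • ∫ θ in 0..π / 2, u (sin θ) := by
  have := (periodic_comp_abs_sin u).intervalIntegral_add_zsmul_eq 2 0
    (intervalIntegrable_comp_abs_sin hu)
  rw [zero_add, show (2 : ℤ) • π = 2 * π by simp, zero_add] at this
  rw [this, integral_eq_two_smul_of_reflect (fun θ ↦ by simp [sin_pi_sub])
    (intervalIntegrable_comp_abs_sin hu 0 (π / 2)), integral_congr (eqOn_comp_abs_sin u)]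
  module

theorem ae_sin_ne_zero : ∀ᵐ θ : ℝ, sin θ ≠ 0 :=
  ((countable_range fun n : ℤ ↦ (n : ℝ) * π).ae_notMem volume).mono fun _ hθ hsin ↦
    hθ (sin_eq_zero_iff.1 hsin)

end AbsSin

theorem circleAverage_le_of_ae_le {c : ℂ} {R : ℝ} {f : ℂ → ℝ} {φ : ℝ → ℝ}
    (hf : CircleIntegrable f c R) (hφ : IntervalIntegrable φ volume 0 (2 * π))
    (h : ∀ᵐ θ, f (circleMap c R θ) ≤ φ θ) :
    circleAverage f c R ≤ (2 * π)⁻¹ * ∫ θ in 0..2 * π, φ θ :=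
  mul_le_mul_of_nonneg_left (integral_mono_ae two_pi_pos.le hf hφ h) (by positivity)

namespace AnalyticOnNhd

variable {c : ℂ} {R : ℝ} {f : ℂ → ℂ}

theorem log_norm_le_circleAverage (hR : 0 < R) (hf : AnalyticOnNhd ℂ f (closedBall c R))
    (hfc : f c ≠ 0) : Real.log ‖f c‖ ≤ circleAverage (Real.log ‖f ·‖) c R := by
  rw [← abs_of_pos hR] at hf
  rw [hf.circleAverage_log_norm hR.ne' hfc, le_add_iff_nonneg_left]
  refine finsum_nonneg fun u ↦ ?_
  by_cases hu : u ∈ closedBall c |R|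
  · refine mul_nonneg (by exact_mod_cast MeromorphicOn.AnalyticOnNhd.divisor_nonneg hf u) ?_
    rcases eq_or_ne u c with rfl | huc
    · simp
    · rw [mem_closedBall, abs_of_pos hR, dist_comm, dist_eq_norm] at hu
      have : 0 < ‖c - u‖ := norm_pos_iff.2 (sub_ne_zero.2 huc.symm)
      exact Real.log_nonneg (by rwa [← div_eq_mul_inv, one_le_div this])
  · simp [Function.locallyFinsuppWithin.apply_eq_zero_of_notMem _ hu]

theorem ae_circleMap_ne_zero (hR : 0 < R) (hf : AnalyticOnNhd ℂ f (closedBall c R))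
    (hfc : f c ≠ 0) : ∀ᵐ θ, f (circleMap c R θ) ≠ 0 := by
  rw [← abs_of_pos hR] at hf
  have hc : c ∈ closedBall c |R| := mem_closedBall_self (abs_nonneg R)
  have hord_c : meromorphicOrderAt f c ≠ ⊤ := by
    simp [(hf c hc).meromorphicOrderAt_eq, (hf c hc).analyticOrderAt_eq_zero.2 hfc]
  have hord : ∀ u ∈ sphere c |R|, meromorphicOrderAt f u ≠ ⊤ := fun u hu ↦
    hf.meromorphicOn.meromorphicOrderAt_ne_top_of_isPreconnected
      (convex_closedBall c |R|).isPreconnected hc (sphere_subset_closedBall hu) hord_c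
  have hcodiscrete := circleMap_preimage_codiscrete hR.ne'
    ((hf.meromorphicOn.mono_set sphere_subset_closedBall).eventually_codiscreteWithin_apply_ne_zero
      hord)
  have hae := ae_restrict_le_codiscreteWithin (μ := (volume : Measure ℝ)) .univ hcodiscrete
  rwa [Measure.restrict_univ] at hae

end AnalyticOnNhd

theorem abs_apply_zero_le_exp_average_log_bound_general
    (Δ : ℝ) (g : ℂ → ℂ)
    (hg : DifferentiableOn ℂ g (Metric.ball (0 : ℂ) Δ))
    (F : ℝ → ℝ)
    (hbound : ∀ ω : ℂ, ‖ω‖ < Δ → ω.im ≠ 0 → ‖g ω‖ ≤ F |ω.im|)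
    (ρ : ℝ) (hρ0 : 0 < ρ) (hρΔ : ρ < Δ)
    (hint : IntervalIntegrable (fun θ : ℝ => Real.log (F (ρ * Real.sin θ)))
      MeasureTheory.volume 0 (Real.pi / 2)) :
    ‖g 0‖ ≤
      Real.exp ((2 / Real.pi) *
        ∫ θ in (0:ℝ)..(Real.pi / 2), Real.log (F (ρ * Real.sin θ))) := by
  rcases eq_or_ne (g 0) 0 with hg0 | hg0
  · simpa [hg0] using (exp_pos _).le
  have hga : AnalyticOnNhd ℂ g (closedBall 0 ρ) :=
    (hg.analyticOnNhd isOpen_ball).mono (closedBall_subset_ball hρΔ)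
  have hle : ∀ᵐ θ, log ‖g (circleMap 0 ρ θ)‖ ≤ log (F (ρ * |sin θ|)) := by
    filter_upwards [hga.ae_circleMap_ne_zero hρ0 hg0, ae_sin_ne_zero] with θ hgθ hsin
    have := hbound (circleMap 0 ρ θ) (by simp [abs_of_pos hρ0, hρΔ])
      (by simp [circleMap_zero_im, hρ0.ne', hsin])
    rw [circleMap_zero_im, abs_mul, abs_of_pos hρ0] at this
    exact log_le_log (norm_pos_iff.2 hgθ) this
  have hcirc : CircleIntegrable (log ‖g ·‖) 0 ρ :=
    (hga.mono (by simp [abs_of_pos hρ0, sphere_subset_closedBall])).meromorphicOn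
      |>.circleIntegrable_log_norm
  calc ‖g 0‖ = exp (log ‖g 0‖) := (exp_log (norm_pos_iff.2 hg0)).symm
    _ ≤ exp (circleAverage (log ‖g ·‖) 0 ρ) :=
      exp_le_exp.2 (hga.log_norm_le_circleAverage hρ0 hg0)
    _ ≤ exp ((2 * π)⁻¹ * ∫ θ in 0..2 * π, log (F (ρ * |sin θ|))) :=
      exp_le_exp.2 (circleAverage_le_of_ae_le hcirc
        (intervalIntegrable_comp_abs_sin (u := fun y ↦ log (F (ρ * y))) hint _ _) hle)
    _ = _ := by
      rw [integral_comp_abs_sin_zero_two_pi (u := fun y ↦ log (F (ρ * y))) hint, nsmul_eq_mul]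
      ring_nf

/-- Key estimate: if `g` is analytic on the open disk of radius `Δ`, and
`|g ω| ≤ F (|Im ω|)` there (off the real axis), then for any `ρ ∈ (0, Δ)` for which
`θ ↦ log (F (ρ sin θ))` is integrable on `(0, π/2)`,
`|g 0| ≤ exp ((2/π) ∫₀^{π/2} log (F (ρ sin θ)) dθ)`. -/
theorem abs_apply_zero_le_exp_average_log_bound
    (Δ : ℝ) (hΔ : 0 < Δ) (g : ℂ → ℂ)
    (hg : DifferentiableOn ℂ g (Metric.ball (0 : ℂ) Δ))
    (F : ℝ → ℝ) (hFmeas : Measurable F) (hFpos : ∀ y : ℝ, 0 < y → 0 < F y)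
    (hbound : ∀ ω : ℂ, ‖ω‖ < Δ → ω.im ≠ 0 → ‖g ω‖ ≤ F |ω.im|)
    (ρ : ℝ) (hρ0 : 0 < ρ) (hρΔ : ρ < Δ)
    (hint : IntervalIntegrable (fun θ : ℝ => Real.log (F (ρ * Real.sin θ)))
      MeasureTheory.volume 0 (Real.pi / 2)) :
    ‖g 0‖ ≤
      Real.exp ((2 / Real.pi) *
        ∫ θ in (0:ℝ)..(Real.pi / 2), Real.log (F (ρ * Real.sin θ))) :=
  abs_apply_zero_le_exp_average_log_bound_general Δ g hg F hbound ρ hρ0 hρΔ hint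
end

section
/- Let η, ζ be real numbers with 0 < η ≤ ζ and let k be a natural number. Then there exists a constant c₂ > 0 such that for every integer R ≥ 2 the following hold: (i) if ζ ≥ 1 then Σ_{r=1}^{R−1} (1 + log r)^k / ( r^ζ · (R − r)^η ) ≤ c₂ · (1 + log R)^{k+1} · R^{−η}; (ii) if ζ < 1 then Σ_{r=1}^{R−1} (1 + log r)^k / ( r^ζ · (R − r)^η ) ≤ c₂ · (1 + log R)^k · R^{1−η−ζ}. -/
/-!
Put `x = r` and `y = R - r`. Since `(x + y) / y ≥ 1` and `η ≤ ζ`,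
`x^(-ζ) y^(-η) ≤ (x + y)^(-η) ((x + y) / y)^ζ x^(-ζ) = R^(-η) (1/x + 1/y)^ζ
  ≤ 2^ζ R^(-η) (x^(-ζ) + y^(-ζ))`,
and the two halves give the same sum under `r ↦ R - r`. With `1 + log r ≤ 1 + log R`, the
convolution sum is at most `2^(ζ+1) (1 + log R)^k R^(-η) ∑_{r < R} r^(-ζ)`. The remaining power
sum is at most the harmonic sum `≤ 1 + log R` when `ζ ≥ 1`, and at most `R^(1-ζ) / (1-ζ)`
when `ζ < 1`, by telescoping the concavity bound `(n+1)^(1-ζ) - n^(1-ζ) ≥ (1-ζ) (n+1)^(-ζ)`.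
-/

open Finset Real

lemma Real.add_rpow_le_two_rpow_mul_rpow_add_rpow {a b p : ℝ} (ha : 0 ≤ a) (hb : 0 ≤ b)
    (hp : 0 ≤ p) : (a + b) ^ p ≤ 2 ^ p * (a ^ p + b ^ p) := calc
  (a + b) ^ p ≤ (2 * max a b) ^ p := by rw [two_mul]; gcongr <;> simp
  _ = 2 ^ p * max (a ^ p) (b ^ p) := by
    rw [mul_rpow zero_le_two (by positivity), rpow_max ha hb hp]
  _ ≤ 2 ^ p * (a ^ p + b ^ p) := by
    gcongr; exact max_le_add_of_nonneg (by positivity) (by positivity)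

lemma rpow_neg_mul_rpow_neg_le {x y η ζ : ℝ} (hx : 0 < x) (hy : 0 < y) (hζ : 0 ≤ ζ)
    (hηζ : η ≤ ζ) :
    x ^ (-ζ) * y ^ (-η) ≤ 2 ^ ζ * (x ^ (-ζ) + y ^ (-ζ)) * (x + y) ^ (-η) := by
  have hs : 0 < x + y := by positivity
  calc x ^ (-ζ) * y ^ (-η) = ((x + y) / y) ^ η * x ^ (-ζ) * (x + y) ^ (-η) := by
        rw [div_rpow hs.le hy.le, rpow_neg hy.le, rpow_neg hs.le]
        field_simp
    _ ≤ ((x + y) / y) ^ ζ * x ^ (-ζ) * (x + y) ^ (-η) := by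
        gcongr
        exact (one_le_div hy).2 (by linarith)
    _ = (x⁻¹ + y⁻¹) ^ ζ * (x + y) ^ (-η) := by
        rw [rpow_neg hx.le, ← inv_rpow hx.le, ← mul_rpow (by positivity) (by positivity)]
        congr 2
        field_simp
        ring
    _ ≤ 2 ^ ζ * (x ^ (-ζ) + y ^ (-ζ)) * (x + y) ^ (-η) := by
        rw [rpow_neg hx.le, rpow_neg hy.le, ← inv_rpow hx.le, ← inv_rpow hy.le]
        gcongr
        exact add_rpow_le_two_rpow_mul_rpow_add_rpow (by positivity) (by positivity) hζ

lemma sum_Icc_reflect {M : Type*} [AddCommMonoid M] (f : ℝ → M) (R : ℕ) :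
    ∑ r ∈ Icc 1 (R - 1), f ((R : ℝ) - r) = ∑ r ∈ Icc 1 (R - 1), f r := by
  refine sum_nbij' (R - ·) (R - ·) ?_ ?_ ?_ ?_ ?_ <;> intro r hr <;>
    simp only [mem_Icc] at hr ⊢
  · omega
  · omega
  · omega
  · omega
  · rw [Nat.cast_sub (by omega)]

lemma sum_Icc_rpow_neg_le_one_add_log {a : ℝ} (ha : 1 ≤ a) (m : ℕ) :
    ∑ r ∈ Icc 1 m, (r : ℝ) ^ (-a) ≤ 1 + log m := by
  calc ∑ r ∈ Icc 1 m, (r : ℝ) ^ (-a) ≤ ∑ r ∈ Icc 1 m, (r : ℝ)⁻¹ := by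
        refine sum_le_sum fun r hr => ?_
        rw [← rpow_neg_one]
        exact rpow_le_rpow_of_exponent_le (by exact_mod_cast (mem_Icc.1 hr).1) (by linarith)
    _ ≤ 1 + log m := by
        simpa [harmonic_eq_sum_Icc] using harmonic_le_one_add_log m

lemma sub_one_rpow_le {x p : ℝ} (hx : 1 ≤ x) (hp0 : 0 ≤ p) (hp1 : p ≤ 1) :
    (x - 1) ^ p ≤ x ^ p - p * x ^ (p - 1) := by
  have hx0 : 0 < x := by linarith
  have hinv : x⁻¹ ≤ 1 := inv_le_one_of_one_le₀ hx
  have hbern := rpow_one_add_le_one_add_mul_self (s := -x⁻¹) (by linarith) hp0 hp1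
  calc (x - 1) ^ p = (1 + -x⁻¹) ^ p * x ^ p := by
        rw [← mul_rpow (by linarith) hx0.le]
        congr 1; field_simp; ring
    _ ≤ (1 + p * -x⁻¹) * x ^ p := by gcongr
    _ = x ^ p - p * x ^ (p - 1) := by
        rw [rpow_sub_one hx0.ne']; ring

lemma sum_Icc_rpow_neg_le_div {a : ℝ} (ha0 : 0 ≤ a) (ha1 : a < 1) (m : ℕ) :
    ∑ r ∈ Icc 1 m, (r : ℝ) ^ (-a) ≤ (m : ℝ) ^ (1 - a) / (1 - a) := by
  have hp : 0 < 1 - a := by linarith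
  induction m with
  | zero => simp [zero_rpow hp.ne']
  | succ m ih =>
    have hstep := sub_one_rpow_le (x := m + 1) (by simp) hp.le (by linarith : 1 - a ≤ 1)
    rw [add_sub_cancel_right, sub_sub_cancel_left] at hstep
    rw [sum_Icc_succ_top (by omega), Nat.cast_succ]
    calc ∑ r ∈ Icc 1 m, (r : ℝ) ^ (-a) + ((m : ℝ) + 1) ^ (-a)
        ≤ (m : ℝ) ^ (1 - a) / (1 - a) + ((m : ℝ) + 1) ^ (-a) := by gcongr
      _ ≤ ((m : ℝ) + 1) ^ (1 - a) / (1 - a) := by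
        rw [div_add' _ _ _ hp.ne', div_le_div_iff_of_pos_right hp]
        linarith

lemma sum_log_pow_div_rpow_mul_rpow_le {η ζ : ℝ} (hζ : 0 ≤ ζ) (hηζ : η ≤ ζ)
    (k R : ℕ) :
    ∑ r ∈ Icc 1 (R - 1), (1 + log r) ^ k / ((r : ℝ) ^ ζ * ((R : ℝ) - r) ^ η)
      ≤ 2 ^ (ζ + 1) * (1 + log R) ^ k * (R : ℝ) ^ (-η) *
          ∑ r ∈ Icc 1 (R - 1), (r : ℝ) ^ (-ζ) := by
  calc ∑ r ∈ Icc 1 (R - 1), (1 + log r) ^ k / ((r : ℝ) ^ ζ * ((R : ℝ) - r) ^ η)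
      ≤ ∑ r ∈ Icc 1 (R - 1), (1 + log R) ^ k *
          (2 ^ ζ * ((r : ℝ) ^ (-ζ) + ((R : ℝ) - r) ^ (-ζ)) * (R : ℝ) ^ (-η)) := by
        refine sum_le_sum fun r hr => ?_
        obtain ⟨hr1, hrR⟩ := mem_Icc.1 hr
        have hr0 : (0 : ℝ) < r := by exact_mod_cast hr1
        have hRr : (0 : ℝ) < R - r := sub_pos.2 (by exact_mod_cast (by omega : r < R))
        have hlog : (1 + log r) ^ k ≤ (1 + log R) ^ k := by
          gcongr
          omega
        have hkernel := rpow_neg_mul_rpow_neg_le hr0 hRr hζ hηζ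
        rw [add_sub_cancel] at hkernel
        rw [div_eq_mul_inv, mul_inv, ← rpow_neg hr0.le, ← rpow_neg hRr.le]
        exact mul_le_mul hlog hkernel (by positivity) (by positivity)
    _ = 2 ^ (ζ + 1) * (1 + log R) ^ k * (R : ℝ) ^ (-η) *
          ∑ r ∈ Icc 1 (R - 1), (r : ℝ) ^ (-ζ) := by
        rw [← mul_sum, ← sum_mul, ← mul_sum, sum_add_distrib, sum_Icc_reflect (· ^ (-ζ)),
          rpow_add_one two_ne_zero]
        ring

lemma sum_log_pow_div_rpow_mul_rpow_le_of_one_le {η ζ : ℝ} (hζ : 1 ≤ ζ) (hηζ : η ≤ ζ)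
    (k R : ℕ) :
    ∑ r ∈ Icc 1 (R - 1), (1 + log r) ^ k / ((r : ℝ) ^ ζ * ((R : ℝ) - r) ^ η)
      ≤ 2 ^ (ζ + 1) * (1 + log R) ^ (k + 1) * (R : ℝ) ^ (-η) := by
  have hS : ∑ r ∈ Icc 1 (R - 1), (r : ℝ) ^ (-ζ) ≤ 1 + log R :=
    (sum_le_sum_of_subset_of_nonneg (Icc_subset_Icc_right (Nat.sub_le R 1))
      fun _ _ _ => by positivity).trans (sum_Icc_rpow_neg_le_one_add_log hζ R)
  calc _ ≤ 2 ^ (ζ + 1) * (1 + log R) ^ k * (R : ℝ) ^ (-η) *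
          ∑ r ∈ Icc 1 (R - 1), (r : ℝ) ^ (-ζ) :=
        sum_log_pow_div_rpow_mul_rpow_le (by linarith) hηζ k R
    _ ≤ 2 ^ (ζ + 1) * (1 + log R) ^ k * (R : ℝ) ^ (-η) * (1 + log R) := by gcongr
    _ = 2 ^ (ζ + 1) * (1 + log R) ^ (k + 1) * (R : ℝ) ^ (-η) := by ring

lemma sum_log_pow_div_rpow_mul_rpow_le_of_lt_one {η ζ : ℝ} (hζ0 : 0 ≤ ζ) (hζ1 : ζ < 1)
    (hηζ : η ≤ ζ) (k : ℕ) {R : ℕ} (hR : 0 < R) :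
    ∑ r ∈ Icc 1 (R - 1), (1 + log r) ^ k / ((r : ℝ) ^ ζ * ((R : ℝ) - r) ^ η)
      ≤ 2 ^ (ζ + 1) * (1 - ζ)⁻¹ * (1 + log R) ^ k * (R : ℝ) ^ (1 - η - ζ) := by
  have hS : ∑ r ∈ Icc 1 (R - 1), (r : ℝ) ^ (-ζ) ≤ (R : ℝ) ^ (1 - ζ) / (1 - ζ) := by
    refine (sum_Icc_rpow_neg_le_div hζ0 hζ1 _).trans ?_
    gcongr
    omega
  have hexp : (R : ℝ) ^ (-η) * (R : ℝ) ^ (1 - ζ) = (R : ℝ) ^ (1 - η - ζ) := by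
    rw [← rpow_add (by positivity)]; ring_nf
  calc _ ≤ 2 ^ (ζ + 1) * (1 + log R) ^ k * (R : ℝ) ^ (-η) *
          ∑ r ∈ Icc 1 (R - 1), (r : ℝ) ^ (-ζ) :=
        sum_log_pow_div_rpow_mul_rpow_le hζ0 hηζ k R
    _ ≤ 2 ^ (ζ + 1) * (1 + log R) ^ k * (R : ℝ) ^ (-η) *
          ((R : ℝ) ^ (1 - ζ) / (1 - ζ)) := by
        gcongr
    _ = 2 ^ (ζ + 1) * (1 - ζ)⁻¹ * (1 + log R) ^ k * (R : ℝ) ^ (1 - η - ζ) := by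
        rw [← hexp]; ring

/-- Upper-bound half of the convolution-sum lemma (Lemma 2 of the paper), with
polynomial prefactor `P(x) = (1+x)^k`. -/
theorem convolution_sum_upper_bound
    (η ζ : ℝ) (hη : 0 < η) (hηζ : η ≤ ζ) (k : ℕ) :
    ∃ c₂ : ℝ, 0 < c₂ ∧ ∀ R : ℕ, 2 ≤ R →
      ((1 ≤ ζ →
        ∑ r ∈ Finset.Icc 1 (R - 1),
            (1 + Real.log r) ^ k / ((r : ℝ) ^ ζ * ((R : ℝ) - (r : ℝ)) ^ η)
          ≤ c₂ * (1 + Real.log R) ^ (k + 1) * (R : ℝ) ^ (-η)) ∧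
       (ζ < 1 →
        ∑ r ∈ Finset.Icc 1 (R - 1),
            (1 + Real.log r) ^ k / ((r : ℝ) ^ ζ * ((R : ℝ) - (r : ℝ)) ^ η)
          ≤ c₂ * (1 + Real.log R) ^ k * (R : ℝ) ^ (1 - η - ζ))) := by
  have hζ : 0 ≤ ζ := hη.le.trans hηζ
  refine ⟨2 ^ (ζ + 1) * max 1 (1 - ζ)⁻¹, by positivity,
    fun R hR => ⟨fun hζ1 => ?_, fun hζ1 => ?_⟩⟩
  · refine (sum_log_pow_div_rpow_mul_rpow_le_of_one_le hζ1 hηζ k R).trans ?_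
    gcongr
    exact le_mul_of_one_le_right (by positivity) (le_max_left _ _)
  · refine (sum_log_pow_div_rpow_mul_rpow_le_of_lt_one hζ hζ1 hηζ k (by omega)).trans ?_
    gcongr
    exact le_max_right _ _
end

section
/- Let η, ζ be real numbers with 0 < η ≤ ζ and let k be a natural number. Then there exists a constant c₁ > 0 such that for every integer R ≥ 2 the following hold: (i) if ζ ≥ 1 then Σ_{r=1}^{R−1} (1 + log r)^k / ( r^ζ · (R − r)^η ) ≥ c₁ · R^{−η}; (ii) if ζ < 1 then Σ_{r=1}^{R−1} (1 + log r)^k / ( r^ζ · (R − r)^η ) ≥ c₁ · R^{1−η−ζ}. -/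
open Finset Real

/-! Every summand is at least `R^{-(ζ+η)}`, since `r, R - r ≤ R` and the logarithmic factor is
at least `1`; there are `R - 1 ≥ R / 2` summands, which gives the bound `R^{1-η-ζ} / 2`.
The bound `R^{-η} / 2` already comes from the single summand `r = 1`, which equals
`(R - 1)^{-η}`. -/

noncomputable def convolutionSummand (η ζ : ℝ) (k R r : ℕ) : ℝ :=
  (1 + log r) ^ k / ((r : ℝ) ^ ζ * ((R : ℝ) - r) ^ η)

lemma rpow_neg_add_le_convolutionSummand {η ζ : ℝ} (hη : 0 ≤ η) (hζ : 0 ≤ ζ) (k : ℕ)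
    {R r : ℕ} (hr : 1 ≤ r) (hrR : r < R) :
    (R : ℝ) ^ (-(ζ + η)) ≤ convolutionSummand η ζ k R r := by
  have hr1 : (1 : ℝ) ≤ r := by exact_mod_cast hr
  have hrR' : (r : ℝ) + 1 ≤ R := by exact_mod_cast hrR
  have hRr : (0 : ℝ) < R - r := by linarith
  have hR : (0 : ℝ) < R := by linarith
  have hlog : 1 ≤ (1 + log r) ^ k := one_le_pow₀ (by linarith [log_nonneg hr1])
  have hdenom : (r : ℝ) ^ ζ * ((R : ℝ) - r) ^ η ≤ (R : ℝ) ^ (ζ + η) := by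
    rw [rpow_add hR]
    gcongr; linarith
  calc (R : ℝ) ^ (-(ζ + η)) = 1 / (R : ℝ) ^ (ζ + η) := by rw [rpow_neg hR.le, one_div]
    _ ≤ 1 / ((r : ℝ) ^ ζ * ((R : ℝ) - r) ^ η) := by gcongr
    _ ≤ convolutionSummand η ζ k R r := by unfold convolutionSummand; gcongr

lemma rpow_neg_le_convolutionSummand_one {η : ℝ} (hη : 0 ≤ η) (ζ : ℝ) (k : ℕ) {R : ℕ}
    (hR : 2 ≤ R) : (R : ℝ) ^ (-η) ≤ convolutionSummand η ζ k R 1 := by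
  have hR' : (2 : ℝ) ≤ R := by exact_mod_cast hR
  have hsummand : convolutionSummand η ζ k R 1 = ((R - 1 : ℝ) ^ η)⁻¹ := by
    simp [convolutionSummand]
  rw [hsummand, rpow_neg (by linarith)]
  exact inv_anti₀ (rpow_pos_of_pos (by linarith) η) (rpow_le_rpow (by linarith) (by linarith) hη)

lemma half_mul_rpow_one_sub_le {R : ℝ} (hR : 2 ≤ R) (s : ℝ) :
    1 / 2 * R ^ (1 - s) ≤ (R - 1) * R ^ (-s) := by
  rw [sub_eq_add_neg, rpow_add (by linarith), rpow_one, ← mul_assoc]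
  gcongr
  linarith

/-- Lower-bound half of the convolution-sum lemma (Lemma 2 of the paper), with
polynomial prefactor `P(x) = (1+x)^k`. -/
theorem convolution_sum_lower_bound
    (η ζ : ℝ) (hη : 0 < η) (hηζ : η ≤ ζ) (k : ℕ) :
    ∃ c₁ : ℝ, 0 < c₁ ∧ ∀ R : ℕ, 2 ≤ R →
      ((1 ≤ ζ →
        c₁ * (R : ℝ) ^ (-η) ≤
          ∑ r ∈ Finset.Icc 1 (R - 1),
            (1 + Real.log r) ^ k / ((r : ℝ) ^ ζ * ((R : ℝ) - (r : ℝ)) ^ η)) ∧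
       (ζ < 1 →
        c₁ * (R : ℝ) ^ (1 - η - ζ) ≤
          ∑ r ∈ Finset.Icc 1 (R - 1),
            (1 + Real.log r) ^ k / ((r : ℝ) ^ ζ * ((R : ℝ) - (r : ℝ)) ^ η))) := by
  refine ⟨1 / 2, by norm_num, fun R hR => ?_⟩
  change (1 ≤ ζ → _ ≤ ∑ r ∈ Icc 1 (R - 1), convolutionSummand η ζ k R r) ∧
    (ζ < 1 → _ ≤ ∑ r ∈ Icc 1 (R - 1), convolutionSummand η ζ k R r)
  have hR' : (2 : ℝ) ≤ R := by exact_mod_cast hR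
  have hlower : ∀ r ∈ Icc 1 (R - 1), (R : ℝ) ^ (-(ζ + η)) ≤ convolutionSummand η ζ k R r :=
    fun r hr => rpow_neg_add_le_convolutionSummand hη.le (hη.le.trans hηζ) k
      (mem_Icc.1 hr).1 (by have := (mem_Icc.1 hr).2; omega)
  have hnonneg : ∀ r ∈ Icc 1 (R - 1), 0 ≤ convolutionSummand η ζ k R r :=
    fun r hr => (rpow_nonneg (by positivity) _).trans (hlower r hr)
  refine ⟨fun _ => ?_, fun _ => ?_⟩
  · calc 1 / 2 * (R : ℝ) ^ (-η) ≤ (R : ℝ) ^ (-η) := mul_le_of_le_one_left (by positivity) (by norm_num)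
      _ ≤ convolutionSummand η ζ k R 1 := rpow_neg_le_convolutionSummand_one hη.le ζ k hR
      _ ≤ _ := single_le_sum hnonneg (by simp; omega)
  · calc 1 / 2 * (R : ℝ) ^ (1 - η - ζ) ≤ ((R : ℝ) - 1) * (R : ℝ) ^ (-(ζ + η)) := by
          rw [sub_sub, add_comm η]; exact half_mul_rpow_one_sub_le hR' _
      _ = ∑ r ∈ Icc 1 (R - 1), (R : ℝ) ^ (-(ζ + η)) := by
          rw [sum_const, Nat.card_Icc, Nat.add_sub_cancel, nsmul_eq_mul,
            Nat.cast_sub (by omega : 1 ≤ R), Nat.cast_one]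
      _ ≤ _ := sum_le_sum hlower
end

section
/- Gapped finite-dimensional setting (see context). The function y ↦ Ω(i·y) is defined for all real y, and lim_{T → ∞} ∫_{−T}^{T} Ω(i·y) · i dy = π·( ⟪G, S (P̄ (V G))⟫ + ⟪G, V (P̄ (S G))⟫ ) = π·( ⟪G, (S∘V + V∘S) G⟫ − 2·⟪G, S G⟫·⟪G, V G⟫ ). -/
/-!
On `W = (ℂ ∙ G)ᗮ` the operator `H - E₀` is symmetric and, by the gap, positive definite, so `W`
has an orthonormal eigenbasis `bᵢ` with eigenvalues `μᵢ > 0`. In this basis the two resolvent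
equations are solved coordinatewise, `⟪bᵢ, u₁⟫ = ⟪bᵢ, P̄ V G⟫ / (i y - μᵢ)` and
`⟪bᵢ, u₂⟫ = ⟪bᵢ, P̄ S G⟫ / (i y + μᵢ)`, so `Ω(i y) i` is a finite sum of terms
`aᵢ / (μᵢ - i y) + cᵢ / (μᵢ + i y)`. Each such term integrates over `[-T, T]` to
`2 arctan (T / μᵢ) → π`, and summing the coefficients back gives
`π (⟪G, S (P̄ V G)⟫ + ⟪G, V (P̄ S G)⟫)`. The second identity is `P̄ x = x - ⟪G, x⟫ G`.
-/

open MeasureTheory Filter Topology InnerProductSpace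

open Complex (I)

section ArctanIntegral

variable {μ : ℝ}

theorem Complex.I_mul_ofReal_ne_ofReal (hμ : μ ≠ 0) (y : ℝ) : I * y ≠ μ :=
  fun h => hμ <| by simpa using (congrArg Complex.re h).symm

theorem continuous_inv_ofReal_sub_I_mul (hμ : μ ≠ 0) :
    Continuous fun y : ℝ => ((μ : ℂ) - I * y)⁻¹ :=
  (by fun_prop : Continuous fun y : ℝ => (μ : ℂ) - I * y).inv₀
    fun y => sub_ne_zero.mpr (Complex.I_mul_ofReal_ne_ofReal hμ y).symm

-- `(μ - I t)⁻¹ = (μ + I t) / (μ ^ 2 + t ^ 2)`: the real part integrates to the arctangent, the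
-- imaginary part to the logarithm.
theorem hasDerivAt_arctan_div_add_I_mul_log (hμ : 0 < μ) (y : ℝ) :
    HasDerivAt
      (fun t : ℝ => (Real.arctan (t / μ) : ℂ) + I / 2 * Real.log (μ ^ 2 + t ^ 2))
      ((μ - I * y)⁻¹) y := by
  have hpos : 0 < μ ^ 2 + y ^ 2 := by positivity
  have harctan : HasDerivAt (fun t => Real.arctan (t / μ)) (μ / (μ ^ 2 + y ^ 2)) y := by
    refine ((Real.hasDerivAt_arctan (y / μ)).comp y
      ((hasDerivAt_id y).div_const μ)).congr_deriv ?_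
    field_simp
  have hlog : HasDerivAt (fun t => Real.log (μ ^ 2 + t ^ 2)) (2 * y / (μ ^ 2 + y ^ 2)) y := by
    simpa using ((hasDerivAt_pow 2 y).const_add (μ ^ 2)).log hpos.ne'
  refine (harctan.ofReal_comp.add (hlog.ofReal_comp.const_mul (I / 2))).congr_deriv ?_
  have hsq : (μ : ℂ) ^ 2 + (y : ℂ) ^ 2 ≠ 0 := by exact_mod_cast hpos.ne'
  refine (inv_eq_of_mul_eq_one_right ?_).symm
  push_cast
  field_simp
  ring_nf
  simp only [Complex.I_sq]
  ring

theorem integral_inv_ofReal_sub_I_mul (hμ : 0 < μ) (T : ℝ) :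
    ∫ y in (-T)..T, ((μ : ℂ) - I * y)⁻¹ = 2 * Real.arctan (T / μ) := by
  rw [intervalIntegral.integral_eq_sub_of_hasDerivAt
    (fun y _ => hasDerivAt_arctan_div_add_I_mul_log hμ y)
    ((continuous_inv_ofReal_sub_I_mul hμ.ne').intervalIntegrable _ _)]
  simp only [neg_div, Real.arctan_neg, even_two, Even.neg_pow]
  push_cast
  ring

theorem integral_inv_ofReal_add_I_mul (hμ : 0 < μ) (T : ℝ) :
    ∫ y in (-T)..T, ((μ : ℂ) + I * y)⁻¹ = 2 * Real.arctan (T / μ) := by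
  rw [← integral_inv_ofReal_sub_I_mul hμ T, ← neg_neg T, ← intervalIntegral.integral_comp_neg]
  simp [sub_eq_add_neg]

theorem tendsto_two_mul_arctan_div (hμ : 0 < μ) :
    Tendsto (fun T : ℝ => 2 * Real.arctan (T / μ)) atTop (𝓝 Real.pi) := by
  have h := (Real.tendsto_arctan_atTop.mono_right nhdsWithin_le_nhds).comp
    (tendsto_id.atTop_div_const hμ)
  simpa [mul_div_cancel₀] using h.const_mul 2

theorem tendsto_integral_sum_inv_ofReal_sub_add_I_mul {ι : Type*} [Fintype ι] {μ : ι → ℝ}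
    (hμ : ∀ i, 0 < μ i) (a b : ι → ℂ) :
    Tendsto (fun T : ℝ => ∫ y in (-T)..T,
        ∑ i, (a i * ((μ i : ℂ) - I * y)⁻¹ + b i * ((μ i : ℂ) + I * y)⁻¹))
      atTop (𝓝 (Real.pi * ∑ i, (a i + b i))) := by
  have hcont₁ i : Continuous fun y : ℝ => a i * ((μ i : ℂ) - I * y)⁻¹ :=
    continuous_const.mul (continuous_inv_ofReal_sub_I_mul (hμ i).ne')
  have hcont₂ i : Continuous fun y : ℝ => b i * ((μ i : ℂ) + I * y)⁻¹ :=
    continuous_const.mul <| by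
      simpa [Function.comp_def] using
        (continuous_inv_ofReal_sub_I_mul (hμ i).ne').comp continuous_neg
  have hint T : ∫ y in (-T)..T,
      ∑ i, (a i * ((μ i : ℂ) - I * y)⁻¹ + b i * ((μ i : ℂ) + I * y)⁻¹) =
        ∑ i, (a i + b i) * (2 * Real.arctan (T / μ i) : ℝ) := by
    rw [intervalIntegral.integral_finsetSum]
    swap
    · exact fun i _ => ((hcont₁ i).add (hcont₂ i)).intervalIntegrable _ _
    refine Finset.sum_congr rfl fun i _ => ?_
    rw [intervalIntegral.integral_add ((hcont₁ i).intervalIntegrable _ _)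
        ((hcont₂ i).intervalIntegrable _ _),
      intervalIntegral.integral_const_mul, intervalIntegral.integral_const_mul,
      integral_inv_ofReal_sub_I_mul (hμ i), integral_inv_ofReal_add_I_mul (hμ i)]
    push_cast
    ring
  simp only [hint, Finset.mul_sum]
  refine tendsto_finsetSum _ fun i _ => ?_
  rw [mul_comm]
  exact ((Complex.continuous_ofReal.tendsto _).comp (tendsto_two_mul_arctan_div (hμ i))).const_mul _

end ArctanIntegral

section Resolvent

variable {𝕜 E F : Type*} [RCLike 𝕜] [NormedAddCommGroup E] [InnerProductSpace 𝕜 E]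
  [NormedAddCommGroup F] [InnerProductSpace 𝕜 F]

theorem LinearMap.IsSymmetric.exists_orthonormalBasis_eigenvectors_of_pos {A : E →ₗ[𝕜] E}
    (hA : A.IsSymmetric) {W : Submodule 𝕜 E} [FiniteDimensional 𝕜 W]
    (hW : W ∈ Module.End.invtSubmodule A)
    (hpos : ∀ w ∈ W, w ≠ 0 → 0 < RCLike.re ⟪w, A w⟫_𝕜) :
    ∃ (n : ℕ) (b : OrthonormalBasis (Fin n) 𝕜 W) (μ : Fin n → ℝ),
      (∀ i, 0 < μ i) ∧ ∀ i, A (b i) = (μ i : 𝕜) • (b i : E) := by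
  have hAW := hA.restrict_invariant hW
  set b := hAW.eigenvectorBasis rfl
  set μ := hAW.eigenvalues rfl
  have hb i : A (b i) = (μ i : 𝕜) • (b i : E) :=
    congrArg Subtype.val (hAW.apply_eigenvectorBasis rfl i)
  refine ⟨_, b, μ, fun i => ?_, hb⟩
  have h := hpos _ (b i).2 (by simpa using b.orthonormal.ne_zero i)
  rw [hb, inner_smul_right, inner_self_eq_norm_sq_to_K, ← Submodule.coe_norm,
    b.orthonormal.1 i] at h
  simpa using h

theorem OrthonormalBasis.inner_apply_eq_sum {ι : Type*} [Fintype ι] {W : Submodule 𝕜 E}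
    (b : OrthonormalBasis ι 𝕜 W) (B : E →L[𝕜] F) (g : F) {u : E} (hu : u ∈ W) :
    ⟪g, B u⟫_𝕜 = ∑ i, ⟪(b i : E), u⟫_𝕜 * ⟪g, B (b i)⟫_𝕜 := by
  lift u to W using hu
  conv_lhs => rw [← b.sum_repr' u]
  simp [inner_sum, inner_smul_right]

theorem LinearMap.IsSymmetric.exists_orthonormalBasis_orthogonal_eigenvectors
    [FiniteDimensional 𝕜 E] {A : E →ₗ[𝕜] E} (hA : A.IsSymmetric) {G : E} (hG : A G ∈ 𝕜 ∙ G)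
    {Δ : ℝ} (hΔ : 0 < Δ)
    (hgap : ∀ w ∈ (𝕜 ∙ G)ᗮ, Δ * ‖w‖ ^ 2 ≤ RCLike.re ⟪w, A w⟫_𝕜) :
    ∃ (n : ℕ) (b : OrthonormalBasis (Fin n) 𝕜 (𝕜 ∙ G)ᗮ) (μ : Fin n → ℝ),
      (∀ i, 0 < μ i) ∧ ∀ i, A (b i) = (μ i : 𝕜) • (b i : E) := by
  have hAG : (𝕜 ∙ G) ∈ Module.End.invtSubmodule A := fun x hx => by
    obtain ⟨c, rfl⟩ := Submodule.mem_span_singleton.mp hx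
    simpa using Submodule.smul_mem _ c hG
  exact hA.exists_orthonormalBasis_eigenvectors_of_pos
    (hA.orthogonalComplement_mem_invtSubmodule hAG) fun w hw hw0 =>
      (mul_pos hΔ (pow_pos (norm_pos_iff.mpr hw0) 2)).trans_le (hgap w hw)

theorem LinearMap.IsSymmetric.inner_eq_div_of_smul_sub_apply_eq {A : E →ₗ[𝕜] E}
    (hA : A.IsSymmetric) {v u f : E} {μ : ℝ} {z : 𝕜} (hv : A v = (μ : 𝕜) • v) (hz : z ≠ μ)
    (hu : z • u - A u = f) : ⟪v, u⟫_𝕜 = ⟪v, f⟫_𝕜 / (z - μ) := by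
  rw [eq_div_iff (sub_ne_zero.mpr hz), ← hu, inner_sub_right, inner_smul_right, ← hA, hv,
    inner_smul_left, RCLike.conj_ofReal]
  ring

theorem LinearMap.IsSymmetric.inner_apply_eq_sum_of_smul_sub_apply_eq {ι : Type*} [Fintype ι]
    {A : E →ₗ[𝕜] E} (hA : A.IsSymmetric) {W : Submodule 𝕜 E} (b : OrthonormalBasis ι 𝕜 W)
    {μ : ι → ℝ} (hb : ∀ i, A (b i) = (μ i : 𝕜) • (b i : E)) {z : 𝕜} (hz : ∀ i, z ≠ μ i)
    {u f : E} (hu : u ∈ W) (hres : z • u - A u = f) (B : E →L[𝕜] F) (g : F) :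
    ⟪g, B u⟫_𝕜 = ∑ i, ⟪(b i : E), f⟫_𝕜 * ⟪g, B (b i)⟫_𝕜 / (z - μ i) := by
  rw [b.inner_apply_eq_sum B g hu]
  refine Finset.sum_congr rfl fun i _ => ?_
  rw [hA.inner_eq_div_of_smul_sub_apply_eq (hb i) (hz i) hres, div_mul_eq_mul_div]

theorem LinearMap.IsSymmetric.inner_apply_eq_sum_of_smul_add_apply_eq {ι : Type*} [Fintype ι]
    {A : E →ₗ[𝕜] E} (hA : A.IsSymmetric) {W : Submodule 𝕜 E} (b : OrthonormalBasis ι 𝕜 W)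
    {μ : ι → ℝ} (hb : ∀ i, A (b i) = (μ i : 𝕜) • (b i : E)) {z : 𝕜} (hz : ∀ i, z ≠ -μ i)
    {u f : E} (hu : u ∈ W) (hres : z • u + A u = f) (B : E →L[𝕜] F) (g : F) :
    ⟪g, B u⟫_𝕜 = ∑ i, ⟪(b i : E), f⟫_𝕜 * ⟪g, B (b i)⟫_𝕜 / (z + μ i) := by
  have hnegA : ((-1 : 𝕜) • A).IsSymmetric := hA.smul (by simp)
  simpa using hnegA.inner_apply_eq_sum_of_smul_sub_apply_eq b (μ := fun i => -μ i)
    (by simp [hb]) (by simpa using hz) hu (by simpa using hres) B g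

theorem Submodule.starProjection_orthogonal_unit_singleton {v : E} (hv : ‖v‖ = 1) (w : E) :
    (𝕜 ∙ v)ᗮ.starProjection w = w - ⟪v, w⟫_𝕜 • v := by
  rw [starProjection_orthogonal_val, starProjection_unit_singleton 𝕜 hv]

end Resolvent

theorem Complex.I_mul_div_sub_sub_I_mul_div_add_mul_I (a b z μ : ℂ) :
    (I * (a / (z - μ)) - I * (b / (z + μ))) * I =
      a * (μ - z)⁻¹ + b * (μ + z)⁻¹ := by
  rw [div_eq_mul_inv, div_eq_mul_inv, ← neg_sub μ z, inv_neg, add_comm z]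
  linear_combination -(a * (μ - z)⁻¹ + b * (μ + z)⁻¹) * Complex.I_sq

theorem integral_Omega_imaginary_axis_general
    {E : Type*} [NormedAddCommGroup E] [InnerProductSpace ℂ E]
    [FiniteDimensional ℂ E]
    (H S V : E →L[ℂ] E) (hH : IsSelfAdjoint H)
    (G : E) (hG : ‖G‖ = 1) (E₀ : ℝ) (hGeig : H G = (E₀ : ℂ) • G)
    (Δ : ℝ) (hΔ : 0 < Δ)
    (hgap : ∀ w ∈ (ℂ ∙ G)ᗮ, Δ * ‖w‖ ^ 2 ≤ (inner ℂ w (H w - (E₀ : ℂ) • w) : ℂ).re)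
    (u₁ u₂ : ℝ → E)
    (hu₁ : ∀ y : ℝ, u₁ y ∈ (ℂ ∙ G)ᗮ)
    (hu₁eq : ∀ y : ℝ, (Complex.I * (y : ℂ)) • u₁ y - (H (u₁ y) - (E₀ : ℂ) • u₁ y) =
      ((ℂ ∙ G)ᗮ.subtypeL.comp (ℂ ∙ G)ᗮ.orthogonalProjectionOnto) (V G))
    (hu₂ : ∀ y : ℝ, u₂ y ∈ (ℂ ∙ G)ᗮ)
    (hu₂eq : ∀ y : ℝ, (Complex.I * (y : ℂ)) • u₂ y + (H (u₂ y) - (E₀ : ℂ) • u₂ y) =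
      ((ℂ ∙ G)ᗮ.subtypeL.comp (ℂ ∙ G)ᗮ.orthogonalProjectionOnto) (S G)) :
    Tendsto (fun T : ℝ => ∫ y in (-T)..T,
        (Complex.I * (inner ℂ G (S (u₁ y)) : ℂ) - Complex.I * (inner ℂ G (V (u₂ y)) : ℂ))
          * Complex.I)
      atTop
      (nhds ((Real.pi : ℂ) *
        ((inner ℂ G (S (((ℂ ∙ G)ᗮ.subtypeL.comp (ℂ ∙ G)ᗮ.orthogonalProjectionOnto) (V G))) : ℂ) +
         (inner ℂ G (V (((ℂ ∙ G)ᗮ.subtypeL.comp (ℂ ∙ G)ᗮ.orthogonalProjectionOnto) (S G))) : ℂ)))) ∧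
    (Real.pi : ℂ) *
        ((inner ℂ G (S (((ℂ ∙ G)ᗮ.subtypeL.comp (ℂ ∙ G)ᗮ.orthogonalProjectionOnto) (V G))) : ℂ) +
         (inner ℂ G (V (((ℂ ∙ G)ᗮ.subtypeL.comp (ℂ ∙ G)ᗮ.orthogonalProjectionOnto) (S G))) : ℂ))
      = (Real.pi : ℂ) *
        ((inner ℂ G ((S.comp V + V.comp S) G) : ℂ)
          - 2 * (inner ℂ G (S G) : ℂ) * (inner ℂ G (V G) : ℂ)) := by
  set W := (ℂ ∙ G)ᗮ
  have hP : W.subtypeL.comp W.orthogonalProjectionOnto = W.starProjection := rfl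
  rw [hP] at hu₁eq hu₂eq ⊢
  set A : E →ₗ[ℂ] E := (H : E →ₗ[ℂ] E) - (E₀ : ℂ) • LinearMap.id
  have hA : A.IsSymmetric := hH.isSymmetric.sub (LinearMap.IsSymmetric.id.smul (by simp))
  obtain ⟨n, b, μ, hμ, hb⟩ :=
    hA.exists_orthonormalBasis_orthogonal_eigenvectors (by simp [A, hGeig]) hΔ hgap
  have hΩ (y : ℝ) :
      (I * ⟪G, S (u₁ y)⟫_ℂ - I * ⟪G, V (u₂ y)⟫_ℂ) * I =
        ∑ i, (⟪(b i : E), W.starProjection (V G)⟫_ℂ * ⟪G, S (b i)⟫_ℂ * ((μ i : ℂ) - I * y)⁻¹ +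
          ⟪(b i : E), W.starProjection (S G)⟫_ℂ * ⟪G, V (b i)⟫_ℂ * ((μ i : ℂ) + I * y)⁻¹) := by
    rw [hA.inner_apply_eq_sum_of_smul_sub_apply_eq b hb
        (fun i => Complex.I_mul_ofReal_ne_ofReal (hμ i).ne' y) (hu₁ y) (hu₁eq y) S G,
      hA.inner_apply_eq_sum_of_smul_add_apply_eq b hb
        (fun i => by
          exact_mod_cast Complex.I_mul_ofReal_ne_ofReal (neg_ne_zero.mpr (hμ i).ne') y)
        (hu₂ y) (hu₂eq y) V G,
      Finset.mul_sum, Finset.mul_sum, ← Finset.sum_sub_distrib, Finset.sum_mul]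
    exact Finset.sum_congr rfl fun i _ => Complex.I_mul_div_sub_sub_I_mul_div_add_mul_I ..
  refine ⟨?_, ?_⟩
  · simp only [hΩ]
    convert tendsto_integral_sum_inv_ofReal_sub_add_I_mul hμ _ _ using 3
    rw [b.inner_apply_eq_sum S G (W.starProjection_apply_mem _),
      b.inner_apply_eq_sum V G (W.starProjection_apply_mem _), Finset.sum_add_distrib]
  · rw [Submodule.starProjection_orthogonal_unit_singleton hG,
      Submodule.starProjection_orthogonal_unit_singleton hG]
    simp only [map_sub, map_smul, inner_sub_right, inner_smul_right, inner_add_right,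
      add_apply, ContinuousLinearMap.comp_apply]
    ring

/-- Gapped finite-dimensional setting. The function `y ↦ Ω(i y)` is defined for all real
`y` (via the unique solutions `u₁ y, u₂ y ∈ W = (ℂ∙G)ᗮ` of the resolvent equations), and
`lim_{T→∞} ∫_{-T}^{T} Ω(i y) i dy
  = π (⟪G, S (P̄ (V G))⟫ + ⟪G, V (P̄ (S G))⟫)
  = π (⟪G, (S∘V + V∘S) G⟫ - 2 ⟪G, S G⟫ ⟪G, V G⟫)`. -/
theorem integral_Omega_imaginary_axis
    {E : Type*} [NormedAddCommGroup E] [InnerProductSpace ℂ E]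
    [FiniteDimensional ℂ E] [Nontrivial E]
    (H S V : E →L[ℂ] E) (hH : IsSelfAdjoint H)
    (G : E) (hG : ‖G‖ = 1) (E₀ : ℝ) (hGeig : H G = (E₀ : ℂ) • G)
    (Δ : ℝ) (hΔ : 0 < Δ)
    (hgap : ∀ w ∈ (ℂ ∙ G)ᗮ, Δ * ‖w‖ ^ 2 ≤ (inner ℂ w (H w - (E₀ : ℂ) • w) : ℂ).re)
    (u₁ u₂ : ℝ → E)
    (hu₁ : ∀ y : ℝ, u₁ y ∈ (ℂ ∙ G)ᗮ)
    (hu₁eq : ∀ y : ℝ, (Complex.I * (y : ℂ)) • u₁ y - (H (u₁ y) - (E₀ : ℂ) • u₁ y) =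
      ((ℂ ∙ G)ᗮ.subtypeL.comp (ℂ ∙ G)ᗮ.orthogonalProjectionOnto) (V G))
    (hu₂ : ∀ y : ℝ, u₂ y ∈ (ℂ ∙ G)ᗮ)
    (hu₂eq : ∀ y : ℝ, (Complex.I * (y : ℂ)) • u₂ y + (H (u₂ y) - (E₀ : ℂ) • u₂ y) =
      ((ℂ ∙ G)ᗮ.subtypeL.comp (ℂ ∙ G)ᗮ.orthogonalProjectionOnto) (S G)) :
    Tendsto (fun T : ℝ => ∫ y in (-T)..T,
        (Complex.I * (inner ℂ G (S (u₁ y)) : ℂ) - Complex.I * (inner ℂ G (V (u₂ y)) : ℂ))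
          * Complex.I)
      atTop
      (nhds ((Real.pi : ℂ) *
        ((inner ℂ G (S (((ℂ ∙ G)ᗮ.subtypeL.comp (ℂ ∙ G)ᗮ.orthogonalProjectionOnto) (V G))) : ℂ) +
         (inner ℂ G (V (((ℂ ∙ G)ᗮ.subtypeL.comp (ℂ ∙ G)ᗮ.orthogonalProjectionOnto) (S G))) : ℂ)))) ∧
    (Real.pi : ℂ) *
        ((inner ℂ G (S (((ℂ ∙ G)ᗮ.subtypeL.comp (ℂ ∙ G)ᗮ.orthogonalProjectionOnto) (V G))) : ℂ) +
         (inner ℂ G (V (((ℂ ∙ G)ᗮ.subtypeL.comp (ℂ ∙ G)ᗮ.orthogonalProjectionOnto) (S G))) : ℂ))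
      = (Real.pi : ℂ) *
        ((inner ℂ G ((S.comp V + V.comp S) G) : ℂ)
          - 2 * (inner ℂ G (S G) : ℂ) * (inner ℂ G (V G) : ℂ)) :=
  integral_Omega_imaginary_axis_general H S V hH G hG E₀ hGeig Δ hΔ hgap u₁ u₂ hu₁ hu₁eq hu₂ hu₂eq
end

section
/- Gapped finite-dimensional setting (see context). Suppose y₀ > 0 and B₀ ≥ 0 satisfy |Ω(i·y)| ≤ B₀ for all real y with |y| ≤ y₀, and suppose B : ℝ → ℝ is nonnegative, integrable on (y₀, ∞), and satisfies |Ω(i·y)| ≤ B(|y|) for all real y with |y| > y₀. Then π · | ⟪G, (S∘V + V∘S) G⟫ − 2·⟪G, S G⟫·⟪G, V G⟫ | ≤ 2·y₀·B₀ + 2·∫_{y₀}^{∞} B(y) dy. -/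
/-!
Let `eᵢ` be an orthonormal eigenbasis of `H` on `W = (ℂ ∙ G)ᗮ`, `H eᵢ = μᵢ eᵢ`, so that
`μᵢ - E₀ ≥ Δ > 0`. Solving the two resolvent equations coordinatewise gives
`Ω(iy) = ∑ᵢ (i aᵢ / (iy - (μᵢ - E₀)) - i bᵢ / (iy + (μᵢ - E₀)))` with
`aᵢ = ⟪G, S eᵢ⟫⟪eᵢ, V G⟫` and `bᵢ = ⟪G, V eᵢ⟫⟪eᵢ, S G⟫`, while inserting
`1 = |G⟩⟨G| + ∑ᵢ |eᵢ⟩⟨eᵢ|` between `S` and `V` shows that the connected correlation `C`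
is `∑ᵢ (aᵢ + bᵢ)`. Each term integrates over `[-R, R]` to `-2i (aᵢ + bᵢ) arctan (R / (μᵢ - E₀))`,
which tends to `-iπ (aᵢ + bᵢ)`. The assumed bounds make `y ↦ Ω(iy)` integrable, so
`π |C| = |∫ Ω(iy) dy| ≤ ∫ |Ω(iy)| dy ≤ 2 y₀ B₀ + 2 ∫_{y₀}^∞ B`.
-/

open MeasureTheory Filter Set Topology Complex InnerProductSpace

theorem I_mul_ofReal_sub_ofReal_ne_zero {L : ℝ} (hL : L ≠ 0) (y : ℝ) :
    I * y - L ≠ 0 := fun h => hL (by simpa using congrArg re h)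

theorem I_mul_ofReal_add_ofReal_ne_zero {L : ℝ} (hL : L ≠ 0) (y : ℝ) :
    I * y + L ≠ 0 := fun h => hL (by simpa using congrArg re h)

noncomputable def resolventTerm (a b : ℂ) (L y : ℝ) : ℂ :=
  I * a / (I * y - L) - I * b / (I * y + L)

noncomputable def resolventTermPrimitive (a b : ℂ) (L y : ℝ) : ℂ :=
  (a - b) * (Real.log (y ^ 2 + L ^ 2) / 2 : ℝ) - I * (a + b) * Real.arctan (y / L)

theorem resolventTerm_eq (a b : ℂ) {L : ℝ} (hL : L ≠ 0) (y : ℝ) :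
    resolventTerm a b L y
      = (a - b) * (y / (y ^ 2 + L ^ 2) : ℝ) - I * (a + b) * (L / (y ^ 2 + L ^ 2) : ℝ) := by
  have hden : ((y ^ 2 + L ^ 2 : ℝ) : ℂ) ≠ 0 := by exact_mod_cast (by positivity : y ^ 2 + L ^ 2 ≠ 0)
  have h₁ := I_mul_ofReal_sub_ofReal_ne_zero hL y
  have h₂ := I_mul_ofReal_add_ofReal_ne_zero hL y
  push_cast at hden ⊢
  rw [resolventTerm]
  field_simp
  linear_combination (a * y * L ^ 2 - y * L ^ 2 * b + I * (a * y ^ 2 * L + y ^ 2 * L * b)) * I_sq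

theorem hasDerivAt_resolventTermPrimitive (a b : ℂ) {L : ℝ} (hL : L ≠ 0) (y : ℝ) :
    HasDerivAt (resolventTermPrimitive a b L) (resolventTerm a b L y) y := by
  have hden : y ^ 2 + L ^ 2 ≠ 0 := by positivity
  have hlog : HasDerivAt (fun y : ℝ => Real.log (y ^ 2 + L ^ 2) / 2) (y / (y ^ 2 + L ^ 2)) y := by
    refine ((((hasDerivAt_pow 2 y).add_const (L ^ 2)).log hden).div_const 2).congr_deriv ?_
    field_simp
    ring
  have harctan : HasDerivAt (fun y : ℝ => Real.arctan (y / L)) (L / (y ^ 2 + L ^ 2)) y := by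
    refine (((hasDerivAt_id' y).div_const L).arctan).congr_deriv ?_
    field_simp
    ring
  rw [resolventTerm_eq a b hL]
  exact (hlog.ofReal_comp.const_mul (a - b)).sub (harctan.ofReal_comp.const_mul (I * (a + b)))

theorem continuous_resolventTerm (a b : ℂ) {L : ℝ} (hL : L ≠ 0) :
    Continuous (resolventTerm a b L) :=
  (continuous_const.div (by fun_prop) (I_mul_ofReal_sub_ofReal_ne_zero hL)).sub
    (continuous_const.div (by fun_prop) (I_mul_ofReal_add_ofReal_ne_zero hL))

theorem intervalIntegral_resolventTerm (a b : ℂ) {L : ℝ} (hL : L ≠ 0) (R : ℝ) :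
    ∫ y in -R..R, resolventTerm a b L y = -2 * I * (a + b) * Real.arctan (R / L) := by
  rw [intervalIntegral.integral_eq_sub_of_hasDerivAt
    (fun y _ => hasDerivAt_resolventTermPrimitive a b hL y)
    ((continuous_resolventTerm a b hL).intervalIntegrable _ _), resolventTermPrimitive,
    resolventTermPrimitive, neg_sq, neg_div, Real.arctan_neg]
  push_cast
  ring

theorem tendsto_intervalIntegral_resolventTerm (a b : ℂ) {L : ℝ} (hL : 0 < L) :
    Tendsto (fun R => ∫ y in -R..R, resolventTerm a b L y) atTop (𝓝 (-I * Real.pi * (a + b))) := by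
  simp_rw [intervalIntegral_resolventTerm a b hL.ne']
  have harctan : Tendsto (fun R => Real.arctan (R / L)) atTop (𝓝 (Real.pi / 2)) :=
    (Real.tendsto_arctan_atTop.mono_right nhdsWithin_le_nhds).comp
      (tendsto_id.atTop_div_const hL)
  have hlim : -I * Real.pi * (a + b) = -2 * I * (a + b) * ((Real.pi / 2 : ℝ) : ℂ) := by
    push_cast
    ring
  rw [hlim]
  exact ((continuous_ofReal.tendsto _).comp harctan).const_mul _

/-- A single `resolventTerm` with `a ≠ b` is not integrable (it decays like `1 / y`), so the
value comes from the limit of the symmetric truncations. -/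
theorem integral_sum_resolventTerm {ι : Type*} [Fintype ι] (a b : ι → ℂ) {L : ι → ℝ}
    (hL : ∀ i, 0 < L i) (hint : Integrable fun y => ∑ i, resolventTerm (a i) (b i) (L i) y) :
    ∫ y, ∑ i, resolventTerm (a i) (b i) (L i) y = -I * Real.pi * ∑ i, (a i + b i) := by
  refine tendsto_nhds_unique (intervalIntegral_tendsto_integral hint tendsto_neg_atTop_atBot
    tendsto_id) ?_
  simp_rw [id, intervalIntegral.integral_finsetSum fun i _ =>
    (continuous_resolventTerm (a i) (b i) (hL i).ne').intervalIntegrable _ _, Finset.mul_sum]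
  exact tendsto_finsetSum _ fun i _ => tendsto_intervalIntegral_resolventTerm _ _ (hL i)

theorem integrable_comp_abs {f : ℝ → ℝ} (hf : IntegrableOn f (Ioi 0)) :
    Integrable fun x => f |x| := by
  have hIoi : IntegrableOn (fun x => f |x|) (Ioi 0) :=
    hf.congr_fun (fun x hx => by rw [abs_of_pos (mem_Ioi.1 hx)]) measurableSet_Ioi
  have hIic : IntegrableOn (fun x => f |x|) (Iic 0) := by
    have hneg : MeasurableEmbedding fun x : ℝ => -x := (Homeomorph.neg ℝ).measurableEmbedding
    rw [← Measure.map_neg_eq_self (volume : Measure ℝ), hneg.integrableOn_map_iff]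
    simp_rw [Function.comp_def, abs_neg, neg_preimage, neg_Iic, neg_zero]
    exact Iff.mpr integrableOn_Ici_iff_integrableOn_Ioi hIoi
  rw [← integrableOn_univ, ← Iic_union_Ioi (a := (0 : ℝ))]
  exact hIic.union hIoi

theorem integrableOn_Ioi_ite_and_integral_eq {y₀ : ℝ} (hy₀ : 0 ≤ y₀) (B₀ : ℝ) {B : ℝ → ℝ}
    (hB : IntegrableOn B (Ioi y₀)) :
    IntegrableOn (fun t => if t ≤ y₀ then B₀ else B t) (Ioi 0) ∧
      ∫ t in Ioi 0, (if t ≤ y₀ then B₀ else B t) = y₀ * B₀ + ∫ t in Ioi y₀, B t := by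
  have hsmall : IntegrableOn (fun t => if t ≤ y₀ then B₀ else B t) (Ioc 0 y₀) :=
    (integrableOn_const measure_Ioc_lt_top.ne).congr_fun
      (fun t ht => (if_pos ht.2).symm) measurableSet_Ioc
  have hlarge : IntegrableOn (fun t => if t ≤ y₀ then B₀ else B t) (Ioi y₀) :=
    hB.congr_fun (fun t ht => (if_neg (not_le.2 ht)).symm) measurableSet_Ioi
  rw [← Ioc_union_Ioi_eq_Ioi hy₀]
  refine ⟨hsmall.union hlarge, ?_⟩
  rw [setIntegral_union (Ioc_disjoint_Ioi le_rfl) measurableSet_Ioi hsmall hlarge,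
    setIntegral_congr_fun measurableSet_Ioc (fun t ht => if_pos ht.2),
    setIntegral_congr_fun measurableSet_Ioi (fun t ht => if_neg (not_le.2 ht)),
    setIntegral_const, Real.volume_real_Ioc_of_le hy₀, sub_zero, smul_eq_mul]

theorem integrable_and_norm_integral_le {E : Type*} [NormedAddCommGroup E] [NormedSpace ℝ E]
    {f : ℝ → E} (hf : AEStronglyMeasurable f) {y₀ B₀ : ℝ} (hy₀ : 0 ≤ y₀)
    (hsmall : ∀ y, |y| ≤ y₀ → ‖f y‖ ≤ B₀) {B : ℝ → ℝ} (hB : IntegrableOn B (Ioi y₀))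
    (hlarge : ∀ y, y₀ < |y| → ‖f y‖ ≤ B |y|) :
    Integrable f ∧ ‖∫ y, f y‖ ≤ 2 * y₀ * B₀ + 2 * ∫ y in Ioi y₀, B y := by
  obtain ⟨hk, hk_integral⟩ := integrableOn_Ioi_ite_and_integral_eq hy₀ B₀ hB
  have hfk : ∀ᵐ y, ‖f y‖ ≤ if |y| ≤ y₀ then B₀ else B |y| := ae_of_all _ fun y => by
    split_ifs with hy
    exacts [hsmall y hy, hlarge y (not_le.1 hy)]
  refine ⟨(integrable_comp_abs hk).mono' hf hfk, ?_⟩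
  calc ‖∫ y, f y‖ ≤ ∫ y, if |y| ≤ y₀ then B₀ else B |y| :=
        norm_integral_le_of_norm_le (integrable_comp_abs hk) hfk
    _ = 2 * y₀ * B₀ + 2 * ∫ y in Ioi y₀, B y := by
        rw [integral_comp_abs (f := fun t => if t ≤ y₀ then B₀ else B t), hk_integral]
        ring

section Spectral

variable {𝕜 E : Type*} [RCLike 𝕜] [NormedAddCommGroup E] [InnerProductSpace 𝕜 E]

theorem inner_eigenvector_sub_smul {H : E →ₗ[𝕜] E} (hH : H.IsSymmetric) {e : E} {μ : ℝ}
    (he : H e = (μ : 𝕜) • e) (c : 𝕜) (u : E) :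
    ⟪e, H u - c • u⟫_𝕜 = (μ - c) * ⟪e, u⟫_𝕜 := by
  rw [inner_sub_right, inner_smul_right, ← hH, he, inner_smul_left, RCLike.conj_ofReal, sub_mul]

theorem mem_orthogonal_singleton_of_eigenvector {H : E →ₗ[𝕜] E} (hH : H.IsSymmetric) {G : E}
    {c : 𝕜} (hG : H G = c • G) {w : E} (hw : w ∈ (𝕜 ∙ G)ᗮ) : H w ∈ (𝕜 ∙ G)ᗮ := by
  rw [Submodule.mem_orthogonal_singleton_iff_inner_right] at hw ⊢
  rw [← hH, hG, inner_smul_left, hw, mul_zero]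

theorem exists_orthonormalBasis_orthogonal_singleton_eigenvectors [FiniteDimensional 𝕜 E]
    {H : E →ₗ[𝕜] E} (hH : H.IsSymmetric) {G : E} {c : 𝕜} (hG : H G = c • G) :
    ∃ (n : ℕ) (e : OrthonormalBasis (Fin n) 𝕜 (𝕜 ∙ G)ᗮ) (μ : Fin n → ℝ),
      ∀ i, H (e i) = (μ i : 𝕜) • (e i : E) := by
  have hT := hH.restrict_invariant fun _ => mem_orthogonal_singleton_of_eigenvector hH hG
  exact ⟨_, hT.eigenvectorBasis rfl, hT.eigenvalues rfl,
    fun i => congrArg Subtype.val (hT.apply_eigenvectorBasis rfl i)⟩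

theorem eq_inner_smul_add_sum_inner_smul {ι : Type*} [Fintype ι] {G : E} (hG : ‖G‖ = 1)
    (e : OrthonormalBasis ι 𝕜 (𝕜 ∙ G)ᗮ) (x : E) :
    x = ⟪G, x⟫_𝕜 • G + ∑ i, ⟪(e i : E), x⟫_𝕜 • (e i : E) := by
  have hGG : ⟪G, G⟫_𝕜 = 1 := by rw [inner_self_eq_norm_sq_to_K, hG]; norm_num
  have hw : x - ⟪G, x⟫_𝕜 • G ∈ (𝕜 ∙ G)ᗮ := by
    rw [Submodule.mem_orthogonal_singleton_iff_inner_right, inner_sub_right, inner_smul_right,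
      hGG, mul_one, sub_self]
  have hcoeff : ∀ i, ⟪(e i : E), x - ⟪G, x⟫_𝕜 • G⟫_𝕜 = ⟪(e i : E), x⟫_𝕜 := fun i => by
    rw [inner_sub_right, inner_smul_right,
      Submodule.mem_orthogonal_singleton_iff_inner_left.1 (e i).2, mul_zero, sub_zero]
  have hexp := congrArg Subtype.val (e.sum_repr' ⟨_, hw⟩)
  simp only [Submodule.coe_sum, Submodule.coe_smul, Submodule.coe_inner, hcoeff] at hexp
  rw [hexp]
  abel

theorem le_eigenvalue_sub_of_gap {H : E →ₗ[𝕜] E} (hH : H.IsSymmetric) {e : E} {μ E₀ Δ : ℝ}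
    (he : H e = (μ : 𝕜) • e) (he_norm : ‖e‖ = 1)
    (hgap : Δ * ‖e‖ ^ 2 ≤ RCLike.re ⟪e, H e - (E₀ : 𝕜) • e⟫_𝕜) : Δ ≤ μ - E₀ := by
  rw [inner_eigenvector_sub_smul hH he, inner_self_eq_norm_sq_to_K, he_norm] at hgap
  simpa using hgap

theorem inner_eigenvector_eq_div_of_smul_sub {H : E →ₗ[𝕜] E} (hH : H.IsSymmetric) {e : E}
    {μ : ℝ} (he : H e = (μ : 𝕜) • e) {c E₀ : 𝕜} (hc : c - (μ - E₀) ≠ 0) {u v : E}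
    (huv : c • u - (H u - E₀ • u) = v) : ⟪e, u⟫_𝕜 = ⟪e, v⟫_𝕜 / (c - (μ - E₀)) := by
  rw [eq_div_iff hc, ← huv, inner_sub_right, inner_smul_right, inner_eigenvector_sub_smul hH he]
  ring

theorem inner_eigenvector_eq_div_of_smul_add {H : E →ₗ[𝕜] E} (hH : H.IsSymmetric) {e : E}
    {μ : ℝ} (he : H e = (μ : 𝕜) • e) {c E₀ : 𝕜} (hc : c + (μ - E₀) ≠ 0) {u v : E}
    (huv : c • u + (H u - E₀ • u) = v) : ⟪e, u⟫_𝕜 = ⟪e, v⟫_𝕜 / (c + (μ - E₀)) := by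
  rw [eq_div_iff hc, ← huv, inner_add_right, inner_smul_right, inner_eigenvector_sub_smul hH he]
  ring

theorem inner_map_eq_add_sum {ι F : Type*} [Fintype ι] [FunLike F E E] [LinearMapClass F 𝕜 E E]
    {G : E} (hG : ‖G‖ = 1) (e : OrthonormalBasis ι 𝕜 (𝕜 ∙ G)ᗮ) (S : F) (z x : E) :
    ⟪z, S x⟫_𝕜 = ⟪z, S G⟫_𝕜 * ⟪G, x⟫_𝕜 + ∑ i, ⟪z, S (e i)⟫_𝕜 * ⟪(e i : E), x⟫_𝕜 := by
  conv_lhs => rw [eq_inner_smul_add_sum_inner_smul hG e x]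
  simp only [map_add, map_sum, map_smul, inner_add_right, inner_sum, inner_smul_right, mul_comm]

theorem inner_starProjection_of_mem {K : Submodule 𝕜 E} [K.HasOrthogonalProjection] {e : E}
    (he : e ∈ K) (x : E) : ⟪e, K.starProjection x⟫_𝕜 = ⟪e, x⟫_𝕜 := by
  rw [← Submodule.inner_starProjection_left_eq_right, Submodule.starProjection_eq_self_iff.2 he]

theorem inner_map_eq_sum_div_of_smul_sub {ι F : Type*} [Fintype ι] [FunLike F E E]
    [LinearMapClass F 𝕜 E E] {H : E →ₗ[𝕜] E} (hH : H.IsSymmetric) {G : E} (hG : ‖G‖ = 1)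
    (e : OrthonormalBasis ι 𝕜 (𝕜 ∙ G)ᗮ) {μ : ι → ℝ} (he : ∀ i, H (e i) = (μ i : 𝕜) • (e i : E))
    (S : F) {c E₀ : 𝕜} (hc : ∀ i, c - (μ i - E₀) ≠ 0) {u x : E} (hu : u ∈ (𝕜 ∙ G)ᗮ)
    (hux : c • u - (H u - E₀ • u) = (𝕜 ∙ G)ᗮ.starProjection x) :
    ⟪G, S u⟫_𝕜 = ∑ i, ⟪G, S (e i)⟫_𝕜 * (⟪(e i : E), x⟫_𝕜 / (c - (μ i - E₀))) := by
  rw [inner_map_eq_add_sum hG e S G u, Submodule.mem_orthogonal_singleton_iff_inner_right.1 hu,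
    mul_zero, zero_add]
  refine Finset.sum_congr rfl fun i _ => ?_
  rw [inner_eigenvector_eq_div_of_smul_sub hH (he i) (hc i) hux,
    inner_starProjection_of_mem (e i).2]

theorem inner_map_eq_sum_div_of_smul_add {ι F : Type*} [Fintype ι] [FunLike F E E]
    [LinearMapClass F 𝕜 E E] {H : E →ₗ[𝕜] E} (hH : H.IsSymmetric) {G : E} (hG : ‖G‖ = 1)
    (e : OrthonormalBasis ι 𝕜 (𝕜 ∙ G)ᗮ) {μ : ι → ℝ} (he : ∀ i, H (e i) = (μ i : 𝕜) • (e i : E))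
    (S : F) {c E₀ : 𝕜} (hc : ∀ i, c + (μ i - E₀) ≠ 0) {u x : E} (hu : u ∈ (𝕜 ∙ G)ᗮ)
    (hux : c • u + (H u - E₀ • u) = (𝕜 ∙ G)ᗮ.starProjection x) :
    ⟪G, S u⟫_𝕜 = ∑ i, ⟪G, S (e i)⟫_𝕜 * (⟪(e i : E), x⟫_𝕜 / (c + (μ i - E₀))) := by
  rw [inner_map_eq_add_sum hG e S G u, Submodule.mem_orthogonal_singleton_iff_inner_right.1 hu,
    mul_zero, zero_add]
  refine Finset.sum_congr rfl fun i _ => ?_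
  rw [inner_eigenvector_eq_div_of_smul_add hH (he i) (hc i) hux,
    inner_starProjection_of_mem (e i).2]

theorem inner_comp_add_comp_sub_eq_sum {ι : Type*} [Fintype ι] {G : E} (hG : ‖G‖ = 1)
    (e : OrthonormalBasis ι 𝕜 (𝕜 ∙ G)ᗮ) (S V : E →L[𝕜] E) :
    ⟪G, (S.comp V + V.comp S) G⟫_𝕜 - 2 * ⟪G, S G⟫_𝕜 * ⟪G, V G⟫_𝕜
      = ∑ i, (⟪G, S (e i)⟫_𝕜 * ⟪(e i : E), V G⟫_𝕜 + ⟪G, V (e i)⟫_𝕜 * ⟪(e i : E), S G⟫_𝕜) := by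
  rw [add_apply, inner_add_right, ContinuousLinearMap.comp_apply,
    ContinuousLinearMap.comp_apply, inner_map_eq_add_sum hG e S G (V G),
    inner_map_eq_add_sum hG e V G (S G), Finset.sum_add_distrib]
  ring

end Spectral

theorem I_mul_inner_sub_I_mul_inner_eq_sum_resolventTerm {E ι F : Type*}
    [NormedAddCommGroup E] [InnerProductSpace ℂ E] [Fintype ι] [FunLike F E E]
    [LinearMapClass F ℂ E E] {H : E →ₗ[ℂ] E} (hH : H.IsSymmetric) {G : E} (hG : ‖G‖ = 1)
    (e : OrthonormalBasis ι ℂ (ℂ ∙ G)ᗮ) {μ : ι → ℝ} (he : ∀ i, H (e i) = (μ i : ℂ) • (e i : E))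
    {E₀ : ℝ} (hμ : ∀ i, μ i - E₀ ≠ 0) (S V : F) (y : ℝ) {u₁ u₂ : E} (hu₁ : u₁ ∈ (ℂ ∙ G)ᗮ)
    (hu₁eq : (I * y) • u₁ - (H u₁ - (E₀ : ℂ) • u₁) = (ℂ ∙ G)ᗮ.starProjection (V G))
    (hu₂ : u₂ ∈ (ℂ ∙ G)ᗮ)
    (hu₂eq : (I * y) • u₂ + (H u₂ - (E₀ : ℂ) • u₂) = (ℂ ∙ G)ᗮ.starProjection (S G)) :
    I * ⟪G, S u₁⟫_ℂ - I * ⟪G, V u₂⟫_ℂ = ∑ i, resolventTerm (⟪G, S (e i)⟫_ℂ * ⟪(e i : E), V G⟫_ℂ)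
      (⟪G, V (e i)⟫_ℂ * ⟪(e i : E), S G⟫_ℂ) (μ i - E₀) y := by
  have hne_sub : ∀ i, I * y - ((μ i : ℂ) - E₀) ≠ 0 := fun i => by
    exact_mod_cast I_mul_ofReal_sub_ofReal_ne_zero (hμ i) y
  have hne_add : ∀ i, I * y + ((μ i : ℂ) - E₀) ≠ 0 := fun i => by
    exact_mod_cast I_mul_ofReal_add_ofReal_ne_zero (hμ i) y
  rw [inner_map_eq_sum_div_of_smul_sub hH hG e he S hne_sub hu₁ hu₁eq,
    inner_map_eq_sum_div_of_smul_add hH hG e he V hne_add hu₂ hu₂eq,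
    Finset.mul_sum, Finset.mul_sum, ← Finset.sum_sub_distrib]
  refine Finset.sum_congr rfl fun i _ => ?_
  simp only [resolventTerm, ofReal_sub, RCLike.ofReal_eq_complex_ofReal]
  ring

theorem connected_correlation_bound_general
    {E : Type*} [NormedAddCommGroup E] [InnerProductSpace ℂ E]
    [FiniteDimensional ℂ E]
    (H S V : E →L[ℂ] E) (hH : IsSelfAdjoint H)
    (G : E) (hG : ‖G‖ = 1) (E₀ : ℝ) (hGeig : H G = (E₀ : ℂ) • G)
    (Δ : ℝ) (hΔ : 0 < Δ)
    (hgap : ∀ w ∈ (ℂ ∙ G)ᗮ, Δ * ‖w‖ ^ 2 ≤ (inner ℂ w (H w - (E₀ : ℂ) • w) : ℂ).re)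
    (u₁ u₂ : ℝ → E)
    (hu₁ : ∀ y : ℝ, u₁ y ∈ (ℂ ∙ G)ᗮ)
    (hu₁eq : ∀ y : ℝ, (Complex.I * (y : ℂ)) • u₁ y - (H (u₁ y) - (E₀ : ℂ) • u₁ y) =
      ((ℂ ∙ G)ᗮ.subtypeL.comp (Submodule.orthogonalProjection (ℂ ∙ G)ᗮ)) (V G))
    (hu₂ : ∀ y : ℝ, u₂ y ∈ (ℂ ∙ G)ᗮ)
    (hu₂eq : ∀ y : ℝ, (Complex.I * (y : ℂ)) • u₂ y + (H (u₂ y) - (E₀ : ℂ) • u₂ y) =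
      ((ℂ ∙ G)ᗮ.subtypeL.comp (Submodule.orthogonalProjection (ℂ ∙ G)ᗮ)) (S G))
    (y₀ B₀ : ℝ) (hy₀ : 0 < y₀)
    (hsmall : ∀ y : ℝ, |y| ≤ y₀ →
      ‖Complex.I * (inner ℂ G (S (u₁ y)) : ℂ)
        - Complex.I * (inner ℂ G (V (u₂ y)) : ℂ)‖ ≤ B₀)
    (B : ℝ → ℝ)
    (hBint : IntegrableOn B (Set.Ioi y₀))
    (hlarge : ∀ y : ℝ, y₀ < |y| →
      ‖Complex.I * (inner ℂ G (S (u₁ y)) : ℂ)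
        - Complex.I * (inner ℂ G (V (u₂ y)) : ℂ)‖ ≤ B |y|) :
    Real.pi *
      ‖(inner ℂ G ((S.comp V + V.comp S) G) : ℂ)
        - 2 * (inner ℂ G (S G) : ℂ) * (inner ℂ G (V G) : ℂ)‖
      ≤ 2 * y₀ * B₀ + 2 * ∫ y in Set.Ioi y₀, B y := by
  obtain ⟨n, e, μ, he⟩ :=
    exists_orthonormalBasis_orthogonal_singleton_eigenvectors hH.isSymmetric hGeig
  have hgapμ : ∀ i, 0 < μ i - E₀ := fun i => hΔ.trans_le <|
    le_eigenvalue_sub_of_gap hH.isSymmetric (he i) (e.orthonormal.1 i) (hgap _ (e i).2)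
  set a : Fin n → ℂ := fun i => ⟪G, S (e i)⟫_ℂ * ⟪(e i : E), V G⟫_ℂ
  set b : Fin n → ℂ := fun i => ⟪G, V (e i)⟫_ℂ * ⟪(e i : E), S G⟫_ℂ
  -- `K.starProjection` unfolds to the `K.subtypeL.comp K.orthogonalProjection` of `hu₁eq`, `hu₂eq`.
  have hΩ : (fun y : ℝ => I * ⟪G, S (u₁ y)⟫_ℂ - I * ⟪G, V (u₂ y)⟫_ℂ)
      = fun y => ∑ i, resolventTerm (a i) (b i) (μ i - E₀) y := funext fun y =>
    I_mul_inner_sub_I_mul_inner_eq_sum_resolventTerm hH.isSymmetric hG e he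
      (fun i => (hgapμ i).ne') S V y (hu₁ y) (hu₁eq y) (hu₂ y) (hu₂eq y)
  have hΩ_cont : Continuous fun y => ∑ i, resolventTerm (a i) (b i) (μ i - E₀) y :=
    continuous_finsetSum _ fun i _ => continuous_resolventTerm _ _ (hgapμ i).ne'
  obtain ⟨hint, hbound⟩ := integrable_and_norm_integral_le (hΩ ▸ hΩ_cont).aestronglyMeasurable
    hy₀.le hsmall hBint hlarge
  rw [hΩ] at hint hbound
  rw [integral_sum_resolventTerm a b hgapμ hint, norm_mul, norm_mul, norm_neg, norm_I,
    norm_real, Real.norm_of_nonneg Real.pi_pos.le, one_mul] at hbound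
  rwa [inner_comp_add_comp_sub_eq_sum hG e S V]

/-- Gapped finite-dimensional setting. If `|Ω(iy)| ≤ B₀` for `|y| ≤ y₀` and
`|Ω(iy)| ≤ B(|y|)` for `|y| > y₀` with `B ≥ 0` integrable on `(y₀, ∞)`, then the
(twice symmetrized) connected correlation obeys
`π |⟪G,(S∘V+V∘S)G⟫ - 2⟪G,SG⟫⟪G,VG⟫| ≤ 2 y₀ B₀ + 2 ∫_{y₀}^∞ B(y) dy`. -/
theorem connected_correlation_bound
    {E : Type*} [NormedAddCommGroup E] [InnerProductSpace ℂ E]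
    [FiniteDimensional ℂ E] [Nontrivial E]
    (H S V : E →L[ℂ] E) (hH : IsSelfAdjoint H)
    (G : E) (hG : ‖G‖ = 1) (E₀ : ℝ) (hGeig : H G = (E₀ : ℂ) • G)
    (Δ : ℝ) (hΔ : 0 < Δ)
    (hgap : ∀ w ∈ (ℂ ∙ G)ᗮ, Δ * ‖w‖ ^ 2 ≤ (inner ℂ w (H w - (E₀ : ℂ) • w) : ℂ).re)
    (u₁ u₂ : ℝ → E)
    (hu₁ : ∀ y : ℝ, u₁ y ∈ (ℂ ∙ G)ᗮ)
    (hu₁eq : ∀ y : ℝ, (Complex.I * (y : ℂ)) • u₁ y - (H (u₁ y) - (E₀ : ℂ) • u₁ y) =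
      ((ℂ ∙ G)ᗮ.subtypeL.comp (Submodule.orthogonalProjection (ℂ ∙ G)ᗮ)) (V G))
    (hu₂ : ∀ y : ℝ, u₂ y ∈ (ℂ ∙ G)ᗮ)
    (hu₂eq : ∀ y : ℝ, (Complex.I * (y : ℂ)) • u₂ y + (H (u₂ y) - (E₀ : ℂ) • u₂ y) =
      ((ℂ ∙ G)ᗮ.subtypeL.comp (Submodule.orthogonalProjection (ℂ ∙ G)ᗮ)) (S G))
    (y₀ B₀ : ℝ) (hy₀ : 0 < y₀) (hB₀ : 0 ≤ B₀)
    (hsmall : ∀ y : ℝ, |y| ≤ y₀ →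
      ‖Complex.I * (inner ℂ G (S (u₁ y)) : ℂ)
        - Complex.I * (inner ℂ G (V (u₂ y)) : ℂ)‖ ≤ B₀)
    (B : ℝ → ℝ) (hBnonneg : ∀ y : ℝ, 0 ≤ B y)
    (hBint : IntegrableOn B (Set.Ioi y₀))
    (hlarge : ∀ y : ℝ, y₀ < |y| →
      ‖Complex.I * (inner ℂ G (S (u₁ y)) : ℂ)
        - Complex.I * (inner ℂ G (V (u₂ y)) : ℂ)‖ ≤ B |y|) :
    Real.pi *
      ‖(inner ℂ G ((S.comp V + V.comp S) G) : ℂ)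
        - 2 * (inner ℂ G (S G) : ℂ) * (inner ℂ G (V G) : ℂ)‖
      ≤ 2 * y₀ * B₀ + 2 * ∫ y in Set.Ioi y₀, B y :=
  connected_correlation_bound_general H S V hH G hG E₀ hGeig Δ hΔ hgap u₁ u₂ hu₁ hu₁eq hu₂ hu₂eq y₀
    B₀ hy₀ hsmall B hBint hlarge
end

section
/- Derivative of a ground-state expectation value along a gapped path. Let E be a nonzero finite-dimensional complex inner product space, let H₀, V, S : E → E be self-adjoint linear maps, set H(λ) := H₀ + λ·V, and let G : ℝ → E be a differentiable map such that for every λ: ‖G(λ)‖ = 1, H(λ) G(λ) = E(λ) • G(λ) with E(λ) := ⟪G(λ), H(λ) G(λ)⟫, and ⟪G(λ), G′(λ)⟫ = 0. Assume moreover a uniform spectral gap: there is Δ > 0 such that for every λ and every w ⊥ G(λ), ⟪w, (H(λ) − E(λ)) w⟫ ≥ Δ·‖w‖². Then for every λ the map u ↦ (H(λ) − E(λ)) u is a bijection of (ℂ∙G(λ))ᗮ, and, letting u(λ) ∈ (ℂ∙G(λ))ᗮ be the unique solution of (H(λ) − E(λ)) u(λ) = V G(λ) − ⟪G(λ), V G(λ)⟫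 • G(λ), the function λ ↦ ⟪G(λ), S G(λ)⟫ is differentiable with d/dλ ⟪G(λ), S G(λ)⟫ = −2·Re ⟪G(λ), S u(λ)⟫. -/
/-!
Differentiating the eigenvalue equation `H(λ) G(λ) = E(λ) G(λ)`, and using the Hellmann–Feynman
formula `E'(λ) = ⟪G, V G⟫` (exact thanks to the gauge `⟪G, G'⟫ = 0`), gives
`(H - E) G' = -(V G - ⟪G, V G⟫ G)`. The gap makes `H - E` injective on `(ℂ ∙ G)ᗮ`, which it
preserves; in finite dimension it is therefore bijective there, and since `G'` and `-u` both lie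
in `(ℂ ∙ G)ᗮ`, `G' = -u`. Finally `d/dλ ⟪G, S G⟫ = 2 Re ⟪G, S G'⟫ = -2 Re ⟪G, S u⟫`.
-/

open scoped InnerProductSpace

theorem LinearMap.existsUnique_mem_apply_eq_of_injOn {K V : Type*} [Field K] [AddCommGroup V]
    [Module K V] {p : Submodule K V} [FiniteDimensional K p] {f : V →ₗ[K] V}
    (hmaps : ∀ x ∈ p, f x ∈ p) (hinj : Set.InjOn f p) {v : V} (hv : v ∈ p) :
    ∃! u, u ∈ p ∧ f u = v := by
  obtain ⟨u, hu, rfl⟩ := (LinearMap.injOn_iff_surjOn hmaps).mp hinj hv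
  exact ⟨u, ⟨hu, rfl⟩, fun y ⟨hy, hyu⟩ => hinj hy hu hyu⟩

section Gap

variable {𝕜 E : Type*} [RCLike 𝕜] [NormedAddCommGroup E] [InnerProductSpace 𝕜 E]

theorem apply_sub_smul_mem_orthogonal_singleton {T : E →ₗ[𝕜] E} (hT : T.IsSymmetric)
    {g : E} {c : 𝕜} (hg : T g = c • g) (e : 𝕜) {w : E} (hw : w ∈ (𝕜 ∙ g)ᗮ) :
    T w - e • w ∈ (𝕜 ∙ g)ᗮ := by
  rw [Submodule.mem_orthogonal_singleton_iff_inner_right] at hw ⊢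
  rw [inner_sub_right, inner_smul_right, ← hT, hg, inner_smul_left, hw, mul_zero, mul_zero,
    sub_zero]

theorem injOn_sub_smul_of_gap {T : E →ₗ[𝕜] E} {e : 𝕜} {g : E} {Δ : ℝ} (hΔ : 0 < Δ)
    (hgap : ∀ w : E, ⟪g, w⟫_𝕜 = 0 → Δ * ‖w‖ ^ 2 ≤ RCLike.re ⟪w, T w - e • w⟫_𝕜) :
    Set.InjOn (T - e • LinearMap.id : E →ₗ[𝕜] E) ((𝕜 ∙ g)ᗮ : Set E) := by
  intro x hx y hy hxy
  have hxy' : T (x - y) - e • (x - y) = 0 := by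
    simp only [LinearMap.sub_apply, LinearMap.smul_apply, LinearMap.id_apply] at hxy
    rw [map_sub, smul_sub, sub_sub_sub_comm, hxy, sub_self]
  have hperp : ⟪g, x - y⟫_𝕜 = 0 :=
    Submodule.mem_orthogonal_singleton_iff_inner_right.mp (Submodule.sub_mem _ hx hy)
  have hle := hgap _ hperp
  rw [hxy', inner_zero_right, map_zero] at hle
  have h0 : ‖x - y‖ ^ 2 = 0 := le_antisymm (nonpos_of_mul_nonpos_right hle hΔ) (sq_nonneg _)
  simpa [sub_eq_zero] using h0

end Gap

section Perturbation

variable {E : Type*} [NormedAddCommGroup E] [InnerProductSpace ℂ E] {G : ℝ → E} {G' : E} {lam : ℝ}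

theorem hasDerivAt_add_smul_apply (H₀ V : E →L[ℂ] E) (hG : HasDerivAt G G' lam) :
    HasDerivAt (fun t : ℝ => (H₀ + (t : ℂ) • V) (G t))
      ((H₀ + (lam : ℂ) • V) G' + V (G lam)) lam := by
  have hH₀ := (H₀.restrictScalars ℝ).hasFDerivAt.comp_hasDerivAt lam hG
  have hV := (Complex.ofRealCLM.hasDerivAt (x := lam)).smul
    ((V.restrictScalars ℝ).hasFDerivAt.comp_hasDerivAt lam hG)
  refine (hH₀.add hV).congr_deriv ?_
  simp only [add_apply, smul_apply, ContinuousLinearMap.coe_restrictScalars',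
    Complex.ofRealCLM_apply, Complex.ofReal_one, one_smul]
  abel

theorem hasDerivAt_inner_add_smul_apply (H₀ V : E →L[ℂ] E)
    (hsymm : (H₀ + (lam : ℂ) • V).IsSymmetric) {c : ℂ}
    (heig : (H₀ + (lam : ℂ) • V) (G lam) = c • G lam) (hG : HasDerivAt G G' lam)
    (hgauge : ⟪G lam, G'⟫_ℂ = 0) :
    HasDerivAt (fun t : ℝ => ⟪G t, (H₀ + (t : ℂ) • V) (G t)⟫_ℂ) ⟪G lam, V (G lam)⟫_ℂ lam := by
  refine (hG.inner ℂ (hasDerivAt_add_smul_apply H₀ V hG)).congr_deriv ?_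
  have h₁ : ⟪G lam, (H₀ + (lam : ℂ) • V) G'⟫_ℂ = 0 := by
    have hHsymm : ⟪(H₀ + (lam : ℂ) • V) (G lam), G'⟫_ℂ = ⟪G lam, (H₀ + (lam : ℂ) • V) G'⟫_ℂ :=
      hsymm _ _
    rw [← hHsymm, heig, inner_smul_left, hgauge, mul_zero]
  have h₂ : ⟪G', (H₀ + (lam : ℂ) • V) (G lam)⟫_ℂ = 0 := by
    rw [heig, inner_smul_right, inner_eq_zero_symm.mp hgauge, mul_zero]
  rw [inner_add_right, h₁, h₂, zero_add, add_zero]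

theorem apply_deriv_sub_smul_deriv_eq (H₀ V : E →L[ℂ] E)
    (hsymm : (H₀ + (lam : ℂ) • V).IsSymmetric)
    (heig : ∀ t : ℝ, (H₀ + (t : ℂ) • V) (G t) = ⟪G t, (H₀ + (t : ℂ) • V) (G t)⟫_ℂ • G t)
    (hG : HasDerivAt G G' lam) (hgauge : ⟪G lam, G'⟫_ℂ = 0) :
    (H₀ + (lam : ℂ) • V) G' - ⟪G lam, (H₀ + (lam : ℂ) • V) (G lam)⟫_ℂ • G'
      = -(V (G lam) - ⟪G lam, V (G lam)⟫_ℂ • G lam) := by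
  have hrhs := (hasDerivAt_inner_add_smul_apply H₀ V hsymm (heig lam) hG hgauge).smul hG
  have hderiv := (hasDerivAt_add_smul_apply H₀ V hG).unique
    (hrhs.congr_of_eventuallyEq (.of_forall heig))
  linear_combination (norm := module) hderiv

theorem hasDerivAt_inner_apply_self {S : E →L[ℂ] E} (hS : S.IsSymmetric)
    (hG : HasDerivAt G G' lam) :
    HasDerivAt (fun t : ℝ => ⟪G t, S (G t)⟫_ℂ) ((2 * (⟪G lam, S G'⟫_ℂ).re : ℝ) : ℂ) lam := by
  refine (hG.inner ℂ ((S.restrictScalars ℝ).hasFDerivAt.comp_hasDerivAt lam hG)).congr_deriv ?_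
  have hSsymm : ⟪S (G lam), G'⟫_ℂ = ⟪G lam, S G'⟫_ℂ := hS _ _
  rw [ContinuousLinearMap.coe_restrictScalars', ← inner_conj_symm G', Function.comp_apply, hSsymm,
    Complex.add_conj]

end Perturbation

theorem deriv_ground_state_expectation_general
    {E : Type*} [NormedAddCommGroup E] [InnerProductSpace ℂ E]
    [FiniteDimensional ℂ E]
    (H₀ V S : E →L[ℂ] E) (hH₀ : IsSelfAdjoint H₀) (hV : IsSelfAdjoint V)
    (hS : IsSelfAdjoint S)
    (G G' : ℝ → E) (hG : ∀ lam : ℝ, HasDerivAt G (G' lam) lam)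
    (heig : ∀ lam : ℝ, (H₀ + (lam : ℂ) • V) (G lam) =
      (inner ℂ (G lam) ((H₀ + (lam : ℂ) • V) (G lam)) : ℂ) • G lam)
    (hgauge : ∀ lam : ℝ, (inner ℂ (G lam) (G' lam) : ℂ) = 0)
    (Δ : ℝ) (hΔ : 0 < Δ)
    (hgap : ∀ lam : ℝ, ∀ w : E, (inner ℂ (G lam) w : ℂ) = 0 →
      Δ * ‖w‖ ^ 2 ≤
        (inner ℂ w ((H₀ + (lam : ℂ) • V) w
          - (inner ℂ (G lam) ((H₀ + (lam : ℂ) • V) (G lam)) : ℂ) • w) : ℂ).re) :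
    (∀ lam : ℝ, ∀ v ∈ (ℂ ∙ (G lam))ᗮ,
      ∃! u, u ∈ (ℂ ∙ (G lam))ᗮ ∧
        (H₀ + (lam : ℂ) • V) u
            - (inner ℂ (G lam) ((H₀ + (lam : ℂ) • V) (G lam)) : ℂ) • u = v) ∧
    ∀ u : ℝ → E, (∀ lam : ℝ, u lam ∈ (ℂ ∙ (G lam))ᗮ) →
      (∀ lam : ℝ,
        (H₀ + (lam : ℂ) • V) (u lam)
            - (inner ℂ (G lam) ((H₀ + (lam : ℂ) • V) (G lam)) : ℂ) • u lam
          = V (G lam) - (inner ℂ (G lam) (V (G lam)) : ℂ) • G lam) →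
      ∀ lam : ℝ,
        HasDerivAt (fun t : ℝ => (inner ℂ (G t) (S (G t)) : ℂ))
          (((-2 * (inner ℂ (G lam) (S (u lam)) : ℂ).re : ℝ) : ℂ)) lam := by
  have hsymm : ∀ t : ℝ, (H₀ + (t : ℂ) • V).IsSymmetric := fun t =>
    (hH₀.add (IsSelfAdjoint.smul (Complex.conj_ofReal t) hV)).isSymmetric
  have hinj := fun t : ℝ =>
    injOn_sub_smul_of_gap (𝕜 := ℂ) (E := E) (T := H₀ + (t : ℂ) • V) hΔ (hgap t)
  refine ⟨fun t v hv => LinearMap.existsUnique_mem_apply_eq_of_injOn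
    (fun w hw => apply_sub_smul_mem_orthogonal_singleton (hsymm t) (heig t) _ hw) (hinj t) hv, ?_⟩
  intro u hu hueq lam
  have hG'u : G' lam = -u lam := by
    refine hinj lam ?_ (Submodule.neg_mem _ (hu lam)) ?_
    · exact Submodule.mem_orthogonal_singleton_iff_inner_right.mpr (hgauge lam)
    · change (H₀ + (lam : ℂ) • V) (G' lam) - (_ : ℂ) • G' lam
        = (H₀ + (lam : ℂ) • V) (-u lam) - (_ : ℂ) • -u lam
      rw [apply_deriv_sub_smul_deriv_eq H₀ V (hsymm lam) heig (hG lam) (hgauge lam), map_neg,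
        smul_neg, ← neg_sub', hueq lam]
  have hderiv := hasDerivAt_inner_apply_self hS.isSymmetric (hG lam)
  rwa [hG'u, map_neg, inner_neg_right, Complex.neg_re, mul_neg, ← neg_mul] at hderiv

/-- Derivative of a ground-state expectation value along a gapped path:
with `H(λ) = H₀ + λV`, a differentiable family of gauged unit eigenvectors `G(λ)`, and
a uniform spectral gap `Δ > 0` above the eigenvalue `E(λ) = ⟪G(λ), H(λ) G(λ)⟫`, the map
`u ↦ (H(λ) - E(λ)) u` is a bijection of `(ℂ∙G(λ))ᗮ` (stated as unique solvability), and
for the unique solution `u(λ) ∈ (ℂ∙G(λ))ᗮ` of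
`(H(λ) - E(λ)) u(λ) = V G(λ) - ⟪G(λ), V G(λ)⟫ • G(λ)` one has
`d/dλ ⟪G(λ), S G(λ)⟫ = -2 Re ⟪G(λ), S u(λ)⟫`. -/
theorem deriv_ground_state_expectation
    {E : Type*} [NormedAddCommGroup E] [InnerProductSpace ℂ E]
    [FiniteDimensional ℂ E] [Nontrivial E]
    (H₀ V S : E →L[ℂ] E) (hH₀ : IsSelfAdjoint H₀) (hV : IsSelfAdjoint V)
    (hS : IsSelfAdjoint S)
    (G G' : ℝ → E) (hG : ∀ lam : ℝ, HasDerivAt G (G' lam) lam)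
    (hnorm : ∀ lam : ℝ, ‖G lam‖ = 1)
    (heig : ∀ lam : ℝ, (H₀ + (lam : ℂ) • V) (G lam) =
      (inner ℂ (G lam) ((H₀ + (lam : ℂ) • V) (G lam)) : ℂ) • G lam)
    (hgauge : ∀ lam : ℝ, (inner ℂ (G lam) (G' lam) : ℂ) = 0)
    (Δ : ℝ) (hΔ : 0 < Δ)
    (hgap : ∀ lam : ℝ, ∀ w : E, (inner ℂ (G lam) w : ℂ) = 0 →
      Δ * ‖w‖ ^ 2 ≤
        (inner ℂ w ((H₀ + (lam : ℂ) • V) w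
          - (inner ℂ (G lam) ((H₀ + (lam : ℂ) • V) (G lam)) : ℂ) • w) : ℂ).re) :
    (∀ lam : ℝ, ∀ v ∈ (ℂ ∙ (G lam))ᗮ,
      ∃! u, u ∈ (ℂ ∙ (G lam))ᗮ ∧
        (H₀ + (lam : ℂ) • V) u
            - (inner ℂ (G lam) ((H₀ + (lam : ℂ) • V) (G lam)) : ℂ) • u = v) ∧
    ∀ u : ℝ → E, (∀ lam : ℝ, u lam ∈ (ℂ ∙ (G lam))ᗮ) →
      (∀ lam : ℝ,
        (H₀ + (lam : ℂ) • V) (u lam)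
            - (inner ℂ (G lam) ((H₀ + (lam : ℂ) • V) (G lam)) : ℂ) • u lam
          = V (G lam) - (inner ℂ (G lam) (V (G lam)) : ℂ) • G lam) →
      ∀ lam : ℝ,
        HasDerivAt (fun t : ℝ => (inner ℂ (G t) (S (G t)) : ℂ))
          (((-2 * (inner ℂ (G lam) (S (u lam)) : ℂ).re : ℝ) : ℂ)) lam :=
  deriv_ground_state_expectation_general H₀ V S hH₀ hV hS G G' hG heig hgauge Δ hΔ hgap
end

section
/- The conformal map f sends the unit disk into the open horizontal strip of half-width v. With Δ > 0, v > 0, T := tanh(Δ·π/(2v)), w(z) := 2z/(1+z²) and f(z) := (v/π)·Log((1 + T·w(z))/(1 − T·w(z))) for |z| < 1: for every z ∈ ℂ with |z| < 1 one has |Im f(z)| < v. -/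
/-! The imaginary part of `(v/π) Log ξ` is `(v/π) arg ξ`, so it suffices that `ξ` is never a
negative real. The Möbius map `s ↦ (1 + s)/(1 - s)` takes the value `ξ < 0` only at a real
`s` with `|s| > 1`, while on the unit disk `w(z) = 2z/(1 + z²)` omits the real rays
`|u| ≥ 1`; since `|T| ≤ 1`, neither can `T w(z)` take such a value. -/

open Complex Real

lemma one_add_sq_ne_zero_of_norm_lt_one {z : ℂ} (hz : ‖z‖ < 1) : 1 + z ^ 2 ≠ 0 := by
  intro h
  have hnorm : ‖z‖ ^ 2 = 1 := by
    rw [← norm_pow, eq_neg_of_add_eq_zero_right h, norm_neg, norm_one]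
  nlinarith [norm_nonneg z]

lemma sq_lt_one_of_ofReal_eq_two_mul_div {z : ℂ} (hz : ‖z‖ < 1) {u : ℝ}
    (hu : (u : ℂ) = 2 * z / (1 + z ^ 2)) : u ^ 2 < 1 := by
  rw [eq_div_iff (one_add_sq_ne_zero_of_norm_lt_one hz)] at hu
  have hre : u * (1 + (z.re ^ 2 - z.im ^ 2)) = 2 * z.re := by
    simpa [pow_two] using congrArg Complex.re hu
  have him : z.im * (u * z.re - 1) = 0 := by
    have : u * (z.re * z.im + z.im * z.re) = 2 * z.im := by
      simpa [pow_two] using congrArg Complex.im hu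
    linear_combination this / 2
  have hdisk : z.re ^ 2 + z.im ^ 2 < 1 := by
    have hnorm := Complex.sq_norm z
    rw [normSq_apply] at hnorm
    nlinarith [norm_nonneg z]
  rcases mul_eq_zero.1 him with hreal | hux
  · rw [hreal] at hre hdisk
    have hsq : (u * (1 + z.re ^ 2)) ^ 2 = (2 * z.re) ^ 2 := by rw [← hre]; ring
    have hlt : (2 * z.re) ^ 2 < (1 + z.re ^ 2) ^ 2 := by
      nlinarith [pow_pos (show 0 < 1 - z.re ^ 2 by linarith) 2]
    rw [mul_pow] at hsq
    exact lt_of_mul_lt_mul_right (by rw [one_mul, hsq]; exact hlt) (sq_nonneg _)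
  · have hunit : z.re ^ 2 + z.im ^ 2 = 1 := by
      linear_combination (1 + z.re ^ 2 - z.im ^ 2) * hux - z.re * hre
    exact absurd hunit hdisk.ne

lemma exists_ofReal_of_arg_one_add_div_one_sub_eq_pi {s : ℂ}
    (h : arg ((1 + s) / (1 - s)) = π) : ∃ r : ℝ, 1 < r ^ 2 ∧ s = r := by
  obtain ⟨hneg, hreal⟩ := arg_eq_pi_iff.1 h
  set x := ((1 + s) / (1 - s)).re
  have hξ : (1 + s) / (1 - s) = x := Complex.ext rfl (by simp [hreal])
  have hden : 1 - s ≠ 0 := by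
    intro h0
    simp [x, h0] at hneg
  have hx : 1 + s = x * (1 - s) := by rw [← hξ, div_mul_cancel₀ _ hden]
  have hx1 : (x : ℂ) + 1 ≠ 0 := by
    intro h0
    rw [eq_neg_of_add_eq_zero_left h0] at hx
    have : (2 : ℂ) = 0 := by linear_combination hx
    norm_num at this
  have hx1' : x + 1 ≠ 0 := by exact_mod_cast hx1
  refine ⟨(x - 1) / (x + 1), ?_, ?_⟩
  · rw [div_pow, one_lt_div (by positivity)]
    nlinarith
  · push_cast
    rw [eq_div_iff hx1]
    linear_combination hx

lemma arg_one_add_mul_div_one_sub_mul_ne_pi {t : ℝ} (ht : t ^ 2 ≤ 1) {z : ℂ} (hz : ‖z‖ < 1) :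
    arg ((1 + t * (2 * z / (1 + z ^ 2))) / (1 - t * (2 * z / (1 + z ^ 2)))) ≠ π := by
  intro h
  obtain ⟨r, hr, hs⟩ := exists_ofReal_of_arg_one_add_div_one_sub_eq_pi h
  have ht0 : t ≠ 0 := by
    rintro rfl
    simp only [ofReal_zero, zero_mul] at hs
    norm_num [ofReal_eq_zero.1 hs.symm] at hr
  have hw : ((r / t : ℝ) : ℂ) = 2 * z / (1 + z ^ 2) := by
    rw [ofReal_div, ← hs, mul_div_cancel_left₀ _ (ofReal_ne_zero.2 ht0)]
  have hrt := sq_lt_one_of_ofReal_eq_two_mul_div hz hw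
  have : r ^ 2 = (r / t) ^ 2 * t ^ 2 := by field_simp
  nlinarith [sq_nonneg (r / t)]

lemma abs_im_ofReal_mul_log_lt {c : ℝ} (hc : 0 < c) {ξ : ℂ} (h : arg ξ ≠ π) :
    |((c : ℂ) * log ξ).im| < c * π := by
  rw [im_ofReal_mul, log_im, abs_mul, abs_of_pos hc]
  exact mul_lt_mul_of_pos_left
    (abs_lt.2 ⟨neg_pi_lt_arg ξ, (arg_le_pi ξ).lt_of_ne h⟩) hc

theorem conformal_map_into_strip_general
    (Δ v : ℝ) (hv : 0 < v) (z : ℂ) (hz : ‖z‖ < 1) :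
    |(((v / Real.pi : ℝ) : ℂ) *
      Complex.log
        ((1 + ((Real.tanh (Δ * Real.pi / (2 * v)) : ℝ) : ℂ) * (2 * z / (1 + z ^ 2))) /
         (1 - ((Real.tanh (Δ * Real.pi / (2 * v)) : ℝ) : ℂ) * (2 * z / (1 + z ^ 2))))).im|
      < v := by
  have hstrip := abs_im_ofReal_mul_log_lt (div_pos hv pi_pos)
    (arg_one_add_mul_div_one_sub_mul_ne_pi (tanh_sq_lt_one (Δ * π / (2 * v))).le hz)
  rwa [div_mul_cancel₀ _ pi_ne_zero] at hstrip

/-- The conformal map `f(z) = (v/π) Log((1 + T w(z))/(1 - T w(z)))`, with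
`T = tanh(Δπ/(2v))` and `w(z) = 2z/(1+z²)`, sends the open unit disk into the open
horizontal strip `|Im f| < v`. -/
theorem conformal_map_into_strip
    (Δ v : ℝ) (hΔ : 0 < Δ) (hv : 0 < v) (z : ℂ) (hz : ‖z‖ < 1) :
    |(((v / Real.pi : ℝ) : ℂ) *
      Complex.log
        ((1 + ((Real.tanh (Δ * Real.pi / (2 * v)) : ℝ) : ℂ) * (2 * z / (1 + z ^ 2))) /
         (1 - ((Real.tanh (Δ * Real.pi / (2 * v)) : ℝ) : ℂ) * (2 * z / (1 + z ^ 2))))).im|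
      < v :=
  conformal_map_into_strip_general Δ v hv z hz
end

section
/- Lower bound for the imaginary part of the complex inverse hyperbolic tangent in the upper half plane. For every w ∈ ℂ with Im w > 0, Im( (1/2)·Log((1 + w)/(1 − w)) ) ≥ arctan(Im w), where Log is the principal branch of the complex logarithm. (Note that Im w > 0 guarantees w ≠ 1 and that (1+w)/(1−w) lies in the open upper half plane, so the principal logarithm is well defined and no branch-cut issue arises.) -/
/-!
With `z = (1 + w) / (1 - w)` the quantity is `arg z / 2`, and in the upper half plane
`arg z = π / 2 - arctan (re z / im z)`, where here `re z / im z = (1 - |w|²) / (2 Im w)`.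
Since `|w|² ≥ (Im w)²`, the value at `w` is at least the value at `i Im w`, which is
`arctan (Im w)` because `artanh (i y) = i arctan y`.
-/

open Complex
open scoped Real

namespace Complex

theorem arg_eq_pi_div_two_sub_arctan {z : ℂ} (hz : 0 < z.im) :
    arg z = π / 2 - Real.arctan (z.re / z.im) := by
  have h_pos : 0 < arg z :=
    (arg_nonneg_iff.2 hz.le).lt_of_ne' fun h => hz.ne' (arg_eq_zero_iff.1 h).2
  have h_lt : arg z < π := arg_lt_pi_iff.2 (Or.inr hz.ne')
  have h_tan : Real.tan (π / 2 - arg z) = z.re / z.im := by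
    rw [Real.tan_pi_div_two_sub, tan_arg, inv_div]
  rw [Real.arctan_eq_of_tan_eq h_tan ⟨by linarith, by linarith⟩]
  ring

theorem re_one_add_div_one_sub (w : ℂ) :
    ((1 + w) / (1 - w)).re = (1 - normSq w) / normSq (1 - w) := by
  rw [div_re, normSq_apply, normSq_apply]
  simp only [add_re, add_im, sub_re, sub_im, one_re, one_im]
  ring

theorem im_one_add_div_one_sub (w : ℂ) :
    ((1 + w) / (1 - w)).im = 2 * w.im / normSq (1 - w) := by
  rw [div_im]
  simp only [add_re, add_im, sub_re, sub_im, one_re, one_im]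
  ring

theorem im_one_half_mul_log (z : ℂ) : ((1 / 2 : ℂ) * log z).im = arg z / 2 := by
  simp [mul_im, log_im]
  ring

theorem im_one_half_mul_log_one_add_div_one_sub {w : ℂ} (hw : 0 < w.im) :
    ((1 / 2 : ℂ) * log ((1 + w) / (1 - w))).im =
      π / 4 - Real.arctan ((1 - normSq w) / (2 * w.im)) / 2 := by
  have h_normSq : 0 < normSq (1 - w) :=
    normSq_pos.2 <| sub_ne_zero.2 fun h => by simp [← h] at hw
  have h_im : 0 < ((1 + w) / (1 - w)).im := by
    rw [im_one_add_div_one_sub]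
    positivity
  rw [im_one_half_mul_log, arg_eq_pi_div_two_sub_arctan h_im, re_one_add_div_one_sub,
    im_one_add_div_one_sub, div_div_div_cancel_right₀ h_normSq.ne']
  ring

theorem im_one_half_mul_log_one_add_div_one_sub_ofReal_mul_I (y : ℝ) :
    ((1 / 2 : ℂ) * log ((1 + y * I) / (1 - y * I))).im = Real.arctan y := by
  have h := congrArg re (ofReal_arctan y)
  rw [ofReal_re, arctan] at h
  rw [h, im_one_half_mul_log]
  simp [mul_re, log_im]
  ring

end Complex

/-- Lower bound for the imaginary part of the complex `artanh` in the upper half plane: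
for `Im w > 0`, `Im((1/2) Log((1+w)/(1-w))) ≥ arctan(Im w)`. -/
theorem im_artanh_ge_arctan_im (w : ℂ) (hw : 0 < w.im) :
    Real.arctan w.im ≤ ((1 / 2 : ℂ) * Complex.log ((1 + w) / (1 - w))).im := by
  have h_axis : ((1 / 2 : ℂ) * log ((1 + w.im * I) / (1 - w.im * I))).im =
      π / 4 - Real.arctan ((1 - w.im ^ 2) / (2 * w.im)) / 2 := by
    simpa [normSq_apply, sq] using
      im_one_half_mul_log_one_add_div_one_sub (w := w.im * I) (by simpa using hw)
  have h_le : (1 - normSq w) / (2 * w.im) ≤ (1 - w.im ^ 2) / (2 * w.im) := by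
    gcongr
    nlinarith [normSq_apply w, sq_nonneg w.re]
  calc Real.arctan w.im
      = ((1 / 2 : ℂ) * log ((1 + w.im * I) / (1 - w.im * I))).im :=
        (im_one_half_mul_log_one_add_div_one_sub_ofReal_mul_I w.im).symm
    _ = π / 4 - Real.arctan ((1 - w.im ^ 2) / (2 * w.im)) / 2 := h_axis
    _ ≤ π / 4 - Real.arctan ((1 - normSq w) / (2 * w.im)) / 2 := by gcongr
    _ = ((1 / 2 : ℂ) * log ((1 + w) / (1 - w))).im :=
        (im_one_half_mul_log_one_add_div_one_sub hw).symm
end
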